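/- arXiv:0911.0054 — 8 statements merged into one kernel-verified Lean document; each statement's English description precedes it below -/
import Mathlib

section
/- Let p ∈ (0,1) and let X be a Bernoulli(p) random variable (X = 1 with probability p and X = 0 with probability 1-p). Then for every integer k ≥ 3, |E[(X - p)^k]| ≤ (1/2)·k!·α^(k-2)·(p(1-p))^(k/2) where α = (p(1-p))^(-1/2); that is, α = 1/√(p(1-p)) is an analytic standardized moment of the Bernoulli family at any parameter. -/
/-!
The `k`-th central moment of Bernoulli(p) is `p q^k + q (-p)^k` with `q = 1 - p`, and for `k ≥ 2`
its absolute value is at most `p q (q^(k-1) + p^(k-1)) ≤ p q (q + p) = p q`, the variance.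
With `α = (pq)^(-1/2)` the right-hand side is exactly `(1/2) k! · pq ≥ pq`.
-/

open MeasureTheory Nat

open scoped NNReal

theorem integral_map_bernoulli (q : ℝ≥0) (hq : q ≤ 1) (g : Bool → ℝ) {f : ℝ → ℝ}
    (hf : Measurable f) :
    ∫ x, f x ∂((PMF.bernoulli q hq).map g).toMeasure = q * f (g true) + (1 - q) * f (g false) := by
  have hg : Measurable g := measurable_of_finite g
  rw [← PMF.toMeasure_map _ _ hg, integral_map hg.aemeasurable hf.aestronglyMeasurable,
    PMF.integral_eq_sum]
  simp [PMF.bernoulli_apply, NNReal.coe_sub hq]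

theorem abs_bernoulli_central_moment_le {p : ℝ} (hp0 : 0 ≤ p) (hp1 : p ≤ 1) {k : ℕ}
    (hk : 2 ≤ k) : |p * (1 - p) ^ k + (1 - p) * (-p) ^ k| ≤ p * (1 - p) := by
  have hq : 0 ≤ 1 - p := by linarith
  obtain ⟨n, rfl⟩ : ∃ n, k = n + 2 := ⟨k - 2, by omega⟩
  calc |p * (1 - p) ^ (n + 2) + (1 - p) * (-p) ^ (n + 2)|
      ≤ p * (1 - p) ^ (n + 2) + (1 - p) * p ^ (n + 2) := by
        grw [abs_add_le]; simp [abs_mul, abs_of_nonneg hp0, abs_of_nonneg hq]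
    _ = p * (1 - p) * ((1 - p) ^ (n + 1) + p ^ (n + 1)) := by ring
    _ ≤ p * (1 - p) * ((1 - p) + p) := by
        gcongr
        · exact pow_le_of_le_one hq (by linarith) (by omega)
        · exact pow_le_of_le_one hp0 hp1 (by omega)
    _ = p * (1 - p) := by ring

theorem rpow_neg_half_pow_mul_rpow_half {v : ℝ} (hv : 0 < v) {k : ℕ} (hk : 2 ≤ k) :
    (v ^ (-(1 / 2 : ℝ))) ^ (k - 2) * v ^ ((k : ℝ) / 2) = v := by
  rw [← Real.rpow_natCast, ← Real.rpow_mul hv.le, ← Real.rpow_add hv, Nat.cast_sub hk]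
  convert Real.rpow_one v using 2
  ring

/-- α = 1/√(p(1-p)) is an analytic standardized moment of the Bernoulli(p) family:
for every k ≥ 3 the k-th central moment satisfies
|m_k| ≤ (1/2)·k!·α^(k-2)·(p(1-p))^(k/2). -/
theorem bernoulli_analytic_standardized_moment
    (p : ℝ) (hp0 : 0 < p) (hp1 : p < 1)
    (μ : Measure ℝ)
    (hμ : μ = ((PMF.bernoulli (Real.toNNReal p)
        (by simpa using Real.toNNReal_le_one.mpr hp1.le)).map
          (fun b => if b then (1 : ℝ) else 0)).toMeasure)
    (α : ℝ) (hα : α = (p * (1 - p)) ^ (-(1/2 : ℝ)))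
    (k : ℕ) (hk : 3 ≤ k) :
    |∫ x, (x - p) ^ k ∂μ| ≤
      (1/2) * (k.factorial : ℝ) * α ^ (k - 2) * (p * (1 - p)) ^ ((k : ℝ) / 2) := by
  have hk2 : 2 ≤ k := by omega
  have hvar : 0 < p * (1 - p) := mul_pos hp0 (by linarith)
  rw [hμ, integral_map_bernoulli _ _ _ (by fun_prop), hα, mul_assoc,
    rpow_neg_half_pow_mul_rpow_half hvar hk2]
  have hfact : (1 : ℝ) ≤ 1 / 2 * k ! := by
    have : (2 : ℝ) ≤ k ! := by exact_mod_cast Nat.factorial_le hk2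
    linarith
  simpa [Real.coe_toNNReal _ hp0.le] using
    (abs_bernoulli_central_moment_le hp0.le hp1.le hk2).trans
      (le_mul_of_one_le_left hvar.le hfact)
end

section
/- Let α > 0 and let m : ℕ → ℝ satisfy m 2 > 0 and the analytic growth condition with constant α. Set s = min{1/(4·α·√(m 2)), 1}. Then the series ∑_{k≥2} m_k·s^k/k! converges absolutely and (1/3)·(m 2)/max{16·α²·(m 2), 1} ≤ ∑_{k=2}^∞ m_k·s^k/k! ≤ (2/3)·(m 2)/max{16·α²·(m 2), 1}. -/
/-- Lemma 4 of the paper (upper and lower series bounds): if m satisfies the analytic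
growth condition with constant α and s = min{1/(4α√(m 2)), 1}, then the series
∑_{k≥2} m_k s^k / k! converges absolutely and lies between
(1/3)·(m 2)/max{16α²(m 2),1} and (2/3)·(m 2)/max{16α²(m 2),1}. -/
theorem analytic_growth_series_bounds
    (α : ℝ) (hα : 0 < α) (m : ℕ → ℝ) (hm2 : 0 < m 2)
    (hgrowth : ∀ k : ℕ, 3 ≤ k →
      |m k| ≤ (1 / 2) * (k.factorial : ℝ) * α ^ (k - 2) * (m 2) ^ ((k : ℝ) / 2))
    (s : ℝ) (hs : s = min (1 / (4 * α * Real.sqrt (m 2))) 1) :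
    Summable (fun k : ℕ => |m (k + 2) * s ^ (k + 2) / ((k + 2).factorial : ℝ)|) ∧
    (1 / 3) * (m 2) / max (16 * α ^ 2 * m 2) 1 ≤
      ∑' k : ℕ, m (k + 2) * s ^ (k + 2) / ((k + 2).factorial : ℝ) ∧
    ∑' k : ℕ, m (k + 2) * s ^ (k + 2) / ((k + 2).factorial : ℝ) ≤
      (2 / 3) * (m 2) / max (16 * α ^ 2 * m 2) 1 := by
  have hsqrt : 0 < Real.sqrt (m 2) := Real.sqrt_pos.2 hm2
  have hb4 : 0 < 4 * α * Real.sqrt (m 2) := by positivity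
  have hspos : 0 < s := by
    rw [hs]; exact lt_min (by positivity) one_pos
  have hs1 : s ≤ 1 := hs ▸ min_le_right _ _
  have hkey0 : 0 ≤ α * Real.sqrt (m 2) * s := by positivity
  have hkey : α * Real.sqrt (m 2) * s ≤ 1 / 4 := by
    have h1 : s ≤ 1 / (4 * α * Real.sqrt (m 2)) := hs ▸ min_le_left _ _
    calc α * Real.sqrt (m 2) * s
        ≤ α * Real.sqrt (m 2) * (1 / (4 * α * Real.sqrt (m 2))) := by
          exact mul_le_mul_of_nonneg_left h1 (by positivity)
      _ = 1 / 4 := by field_simp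
  have hssq : s ^ 2 = 1 / max (16 * α ^ 2 * m 2) 1 := by
    have hb2 : (4 * α * Real.sqrt (m 2)) ^ 2 = 16 * α ^ 2 * m 2 := by
      have := Real.sq_sqrt hm2.le
      nlinarith [this]
    rcases le_total (4 * α * Real.sqrt (m 2)) 1 with h | h
    · have hle : 16 * α ^ 2 * m 2 ≤ 1 := by nlinarith
      rw [hs, min_eq_right, max_eq_right hle]
      · norm_num
      · rw [le_div_iff₀ hb4]; linarith
    · have hge : (1:ℝ) ≤ 16 * α ^ 2 * m 2 := by nlinarith
      rw [hs, min_eq_left, max_eq_left hge]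
      · rw [div_pow, one_pow, hb2]
      · rw [div_le_one hb4]; linarith
  have hsq_pow : ∀ n : ℕ, m 2 ^ ((n : ℝ) / 2) = Real.sqrt (m 2) ^ n := by
    intro n
    rw [Real.sqrt_eq_rpow, ← Real.rpow_natCast (m 2 ^ ((1:ℝ)/2)) n,
      ← Real.rpow_mul hm2.le]
    congr 1
    ring
  -- bound for the tail terms
  have hb : ∀ k : ℕ, |m (k + 1 + 2) * s ^ (k + 1 + 2) / ((k + 1 + 2).factorial : ℝ)| ≤
      m 2 * s ^ 2 / 2 * (1 / 4) ^ (k + 1) := by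
    intro k
    have hg := hgrowth (k + 3) (by omega)
    have e1 : k + 3 - 2 = k + 1 := by omega
    rw [e1, hsq_pow (k + 3)] at hg
    have hfac : (0:ℝ) < ((k + 3).factorial : ℝ) := by positivity
    have hpow : α ^ (k + 1) * Real.sqrt (m 2) ^ (k + 3) * s ^ (k + 3) ≤
        m 2 * s ^ 2 * (1 / 4) ^ (k + 1) := by
      have h1 : α ^ (k + 1) * Real.sqrt (m 2) ^ (k + 3) * s ^ (k + 3)
          = (Real.sqrt (m 2) * s) ^ 2 * (α * Real.sqrt (m 2) * s) ^ (k + 1) := by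
        ring
      have h2 : (α * Real.sqrt (m 2) * s) ^ (k + 1) ≤ (1 / 4 : ℝ) ^ (k + 1) :=
        pow_le_pow_left₀ hkey0 hkey _
      have h3 : (Real.sqrt (m 2) * s) ^ 2 = m 2 * s ^ 2 := by
        rw [mul_pow, Real.sq_sqrt hm2.le]
      rw [h1, h3]
      exact mul_le_mul_of_nonneg_left h2 (by positivity)
    have e2 : k + 1 + 2 = k + 3 := by omega
    rw [e2]
    calc |m (k + 3) * s ^ (k + 3) / ((k + 3).factorial : ℝ)|
        = |m (k + 3)| * s ^ (k + 3) / ((k + 3).factorial : ℝ) := by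
          rw [abs_div, abs_mul, abs_pow, abs_of_pos hspos, Nat.abs_cast]
      _ ≤ ((1 / 2) * ((k + 3).factorial : ℝ) * α ^ (k + 1) * Real.sqrt (m 2) ^ (k + 3))
            * s ^ (k + 3) / ((k + 3).factorial : ℝ) := by
          gcongr
      _ = (1 / 2) * (α ^ (k + 1) * Real.sqrt (m 2) ^ (k + 3) * s ^ (k + 3)) := by
          field_simp
      _ ≤ (1 / 2) * (m 2 * s ^ 2 * (1 / 4) ^ (k + 1)) := by
          linarith
      _ = m 2 * s ^ 2 / 2 * (1 / 4) ^ (k + 1) := by ring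
  have hterm : ∀ k : ℕ, |m (k + 2) * s ^ (k + 2) / ((k + 2).factorial : ℝ)| ≤
      m 2 * s ^ 2 / 2 * (1 / 4 : ℝ) ^ k := by
    intro k
    cases k with
    | zero =>
        rw [show ((0:ℕ) + 2) = 2 from rfl, abs_of_pos (by positivity)]
        norm_num [Nat.factorial]
    | succ n => simpa using hb n
  have hgeo : Summable (fun k : ℕ => m 2 * s ^ 2 / 2 * (1 / 4 : ℝ) ^ k) :=
    (summable_geometric_of_lt_one (by norm_num) (by norm_num)).mul_left _
  have habs : Summable (fun k : ℕ => |m (k + 2) * s ^ (k + 2) / ((k + 2).factorial : ℝ)|) :=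
    Summable.of_nonneg_of_le (fun k => abs_nonneg _) hterm hgeo
  have hsum : Summable (fun k : ℕ => m (k + 2) * s ^ (k + 2) / ((k + 2).factorial : ℝ)) :=
    habs.of_abs
  have h0 : m (0 + 2) * s ^ (0 + 2) / ((0 + 2).factorial : ℝ) = m 2 * s ^ 2 / 2 := by
    norm_num [Nat.factorial]
  have hsplit : (∑' k : ℕ, m (k + 2) * s ^ (k + 2) / ((k + 2).factorial : ℝ))
      = m 2 * s ^ 2 / 2 + ∑' k : ℕ, m (k + 1 + 2) * s ^ (k + 1 + 2) / ((k + 1 + 2).factorial : ℝ) := by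
    rw [Summable.tsum_eq_zero_add hsum]
    norm_num [Nat.factorial]
  have habs' : Summable (fun k : ℕ => |m (k + 1 + 2) * s ^ (k + 1 + 2) / ((k + 1 + 2).factorial : ℝ)|) := by
    exact (summable_nat_add_iff
      (f := fun k : ℕ => |m (k + 2) * s ^ (k + 2) / ((k + 2).factorial : ℝ)|) 1).mpr habs
  have hgeo' : Summable (fun k : ℕ => m 2 * s ^ 2 / 2 * (1 / 4 : ℝ) ^ (k + 1)) := by
    exact (summable_nat_add_iff
      (f := fun k : ℕ => m 2 * s ^ 2 / 2 * (1 / 4 : ℝ) ^ k) 1).mpr hgeo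
  have hsum' : Summable (fun k : ℕ => m (k + 1 + 2) * s ^ (k + 1 + 2) / ((k + 1 + 2).factorial : ℝ)) :=
    habs'.of_abs
  have h3 : (∑' k : ℕ, m 2 * s ^ 2 / 2 * (1 / 4 : ℝ) ^ (k + 1)) = m 2 * s ^ 2 / 6 := by
    calc (∑' k : ℕ, m 2 * s ^ 2 / 2 * (1 / 4 : ℝ) ^ (k + 1))
        = ∑' k : ℕ, m 2 * s ^ 2 / 8 * (1 / 4 : ℝ) ^ k := by
          exact tsum_congr (fun k => by rw [pow_succ]; ring)
      _ = m 2 * s ^ 2 / 8 * (1 - (1 / 4 : ℝ))⁻¹ := by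
          rw [tsum_mul_left, tsum_geometric_of_lt_one (by norm_num) (by norm_num)]
      _ = m 2 * s ^ 2 / 6 := by norm_num; ring
  have ht2 : (∑' k : ℕ, m (k + 1 + 2) * s ^ (k + 1 + 2) / ((k + 1 + 2).factorial : ℝ))
      ≤ m 2 * s ^ 2 / 6 := by
    rw [← h3]
    exact Summable.tsum_le_tsum (fun k => (le_abs_self _).trans (hb k)) hsum' hgeo'
  have ht1 : -(m 2 * s ^ 2 / 6)
      ≤ ∑' k : ℕ, m (k + 1 + 2) * s ^ (k + 1 + 2) / ((k + 1 + 2).factorial : ℝ) := by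
    rw [← h3, ← tsum_neg]
    exact Summable.tsum_le_tsum (fun k => neg_le_of_abs_le (hb k)) hgeo'.neg hsum'
  have hlow : (1 / 3) * m 2 / max (16 * α ^ 2 * m 2) 1 = m 2 * s ^ 2 / 3 := by
    rw [div_eq_mul_inv, ← one_div, ← hssq]; ring
  have hup : (2 / 3) * m 2 / max (16 * α ^ 2 * m 2) 1 = 2 * (m 2 * s ^ 2) / 3 := by
    rw [div_eq_mul_inv, ← one_div, ← hssq]; ring
  refine ⟨habs, ?_, ?_⟩
  · rw [hlow, hsplit]; linarith
  · rw [hup, hsplit]; linarith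
end

section
/- Let α > 0 and let c : ℕ → ℝ satisfy c 2 > 0 and the analytic growth condition with constant α. Let h : ℝ → ℝ be convex on [0,1] with h(0) = 0 and h(s) ≥ 0 for all s ∈ [0,1], and suppose that for every s ∈ [0,1] at which the series ∑_{k≥2} c_k·s^k/k! converges absolutely, one has h(s) = ∑_{k=2}^∞ c_k·s^k/k!. If h(1) ≤ 1/(65·α²) or c 2 ≤ 1/(16·α²), then (1/4)·(c 2) ≤ h(1) ≤ (3/4)·(c 2). -/
/-!
With `β = α √(c 2)`, the growth condition bounds the `k`-th term of the cumulant series by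
`(c 2 s² / 2) (β s)^(k-2)`, so for `β s ≤ 1/4` the series is dominated by a geometric one and
`h s` lies within `c 2 s² / 6` of its quadratic term `c 2 s² / 2`. If `β ≤ 1/4` this gives the
claim at `s = 1`. Otherwise, at `s = 1/(4β)` it gives `h s ≥ 1/(48 α²)`, and convexity with
`h 0 = 0` gives `h 1 ≥ h s / s`, contradicting `h 1 ≤ 1/(65 α²)`.
-/

open Real Set

lemma ConvexOn.map_smul_le_mul {E : Type*} [AddCommGroup E] [Module ℝ E] {D : Set E}
    {f : E → ℝ} (hf : ConvexOn ℝ D f) (h0 : (0 : E) ∈ D) (hf0 : f 0 = 0) {x : E}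
    (hx : x ∈ D) {t : ℝ} (ht0 : 0 ≤ t) (ht1 : t ≤ 1) : f (t • x) ≤ t * f x := by
  simpa [hf0] using hf.2 h0 hx (sub_nonneg.2 ht1) ht0 (sub_add_cancel 1 t)

lemma abs_tsum_sub_apply_zero_le_of_abs_le_geometric {f : ℕ → ℝ} {A q : ℝ} (hq0 : 0 ≤ q)
    (hq1 : q < 1) (hf : ∀ k, |f k| ≤ A * q ^ k) :
    |∑' k, f k - f 0| ≤ A * q / (1 - q) := by
  have hsum : Summable f :=
    .of_norm_bounded ((summable_geometric_of_lt_one hq0 hq1).mul_left A) hf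
  rw [hsum.tsum_eq_zero_add, add_sub_cancel_left, div_eq_mul_inv]
  refine tsum_of_norm_bounded (f := fun k => f (k + 1))
    ((hasSum_geometric_of_lt_one hq0 hq1).mul_left (A * q)) fun k => ?_
  simpa [pow_succ', mul_assoc] using hf (k + 1)

def AnalyticGrowth (α : ℝ) (c : ℕ → ℝ) : Prop :=
  ∀ k : ℕ, 3 ≤ k →
    |c k| ≤ (1 / 2) * (k.factorial : ℝ) * α ^ (k - 2) * (c 2) ^ ((k : ℝ) / 2)

noncomputable def cumulantTerm (c : ℕ → ℝ) (s : ℝ) (k : ℕ) : ℝ :=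
  c (k + 2) * s ^ (k + 2) / ((k + 2).factorial : ℝ)

section

variable {α : ℝ} {c : ℕ → ℝ} {s : ℝ}

lemma abs_cumulantTerm_le (hgrowth : AnalyticGrowth α c) (hc2 : 0 ≤ c 2) (hs : 0 ≤ s)
    (k : ℕ) :
    |cumulantTerm c s k| ≤ c 2 * s ^ 2 / 2 * (α * √(c 2) * s) ^ k := by
  rcases k.eq_zero_or_pos with rfl | hk
  · norm_num [cumulantTerm, Nat.factorial]
    exact (abs_of_nonneg (by positivity)).le
  have hck : |c (k + 2)| ≤ 1 / 2 * ((k + 2).factorial : ℝ) * α ^ k * (c 2 * √(c 2) ^ k) := by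
    have := hgrowth (k + 2) (by omega)
    rwa [Nat.add_sub_cancel, rpow_div_two_eq_sqrt _ hc2, rpow_natCast, pow_add, sq_sqrt hc2,
      mul_comm (√(c 2) ^ k)] at this
  have hfac : (0 : ℝ) < (k + 2).factorial := by positivity
  calc |cumulantTerm c s k| = |c (k + 2)| * s ^ (k + 2) / (k + 2).factorial := by
        rw [cumulantTerm, abs_div, abs_mul, abs_of_nonneg (pow_nonneg hs _), abs_of_pos hfac]
    _ ≤ 1 / 2 * ((k + 2).factorial : ℝ) * α ^ k * (c 2 * √(c 2) ^ k) * s ^ (k + 2)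
          / (k + 2).factorial := by gcongr
    _ = c 2 * s ^ 2 / 2 * (α * √(c 2) * s) ^ k := by field_simp; ring

variable (hα : 0 ≤ α) (hgrowth : AnalyticGrowth α c) (hc2 : 0 ≤ c 2) (hs : 0 ≤ s)
  (hβ : α * √(c 2) * s ≤ 1 / 4)
include hα hgrowth hc2 hs hβ

lemma abs_cumulantTerm_le_quarter_pow (k : ℕ) :
    |cumulantTerm c s k| ≤ c 2 * s ^ 2 / 2 * (1 / 4) ^ k := by
  refine (abs_cumulantTerm_le hgrowth hc2 hs k).trans ?_
  gcongr

lemma summable_abs_cumulantTerm : Summable fun k => |cumulantTerm c s k| :=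
  .of_nonneg_of_le (fun _ => abs_nonneg _)
    (abs_cumulantTerm_le_quarter_pow hα hgrowth hc2 hs hβ)
    ((summable_geometric_of_lt_one (by norm_num) (by norm_num)).mul_left _)

lemma abs_tsum_cumulantTerm_sub_le :
    |∑' k, cumulantTerm c s k - c 2 * s ^ 2 / 2| ≤ c 2 * s ^ 2 / 6 := by
  have h := abs_tsum_sub_apply_zero_le_of_abs_le_geometric (by norm_num) (by norm_num)
    (abs_cumulantTerm_le_quarter_pow hα hgrowth hc2 hs hβ)
  have h0 : cumulantTerm c s 0 = c 2 * s ^ 2 / 2 := by norm_num [cumulantTerm, Nat.factorial]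
  rw [← h0]
  exact h.trans_eq (by ring)

def HasCumulantExpansion (h : ℝ → ℝ) (c : ℕ → ℝ) : Prop :=
  ∀ s ∈ Icc (0 : ℝ) 1,
    Summable (fun k => |cumulantTerm c s k|) → h s = ∑' k, cumulantTerm c s k

lemma HasCumulantExpansion.abs_sub_le {h : ℝ → ℝ} (hrep : HasCumulantExpansion h c)
    (hs1 : s ≤ 1) : |h s - c 2 * s ^ 2 / 2| ≤ c 2 * s ^ 2 / 6 := by
  rw [hrep s ⟨hs, hs1⟩ (summable_abs_cumulantTerm hα hgrowth hc2 hs hβ)]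
  exact abs_tsum_cumulantTerm_sub_le hα hgrowth hc2 hs hβ

end

lemma HasCumulantExpansion.le_apply_one {α : ℝ} {c : ℕ → ℝ} {h : ℝ → ℝ}
    (hrep : HasCumulantExpansion h c) (hα : 0 < α) (hgrowth : AnalyticGrowth α c)
    (hc2 : 0 ≤ c 2) (hconv : ConvexOn ℝ (Icc 0 1) h) (h0 : h 0 = 0)
    (hβ : 1 / 4 < α * √(c 2)) : 1 / (48 * α ^ 2) ≤ h 1 := by
  set s := 1 / (4 * (α * √(c 2))) with hs_def
  have hs0 : 0 < s := by positivity
  have hs1 : s ≤ 1 := by rw [hs_def, div_le_one (by positivity)]; linarith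
  have hsqrt : 0 < √(c 2) := pos_of_mul_pos_right (by linarith) hα.le
  have hβs : α * √(c 2) * s = 1 / 4 := by rw [hs_def]; field_simp
  have hc2s : c 2 * s ^ 2 = 1 / (16 * α ^ 2) := by
    rw [eq_div_iff (by positivity), ← sq_sqrt hc2]
    linear_combination 16 * (α * √(c 2) * s + 1 / 4) * hβs
  have hlow : 1 / (48 * α ^ 2) ≤ h s := by
    have := (abs_le.1 (hrep.abs_sub_le hα.le hgrowth hc2 hs0.le hβs.le hs1)).1
    have h48 : 1 / (48 * α ^ 2) = c 2 * s ^ 2 / 3 := by rw [hc2s]; ring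
    linarith
  have hconv_s : h s ≤ s * h 1 := by
    simpa using hconv.map_smul_le_mul (left_mem_Icc.2 zero_le_one) h0
      (right_mem_Icc.2 zero_le_one) hs0.le hs1
  have hh1 : 0 < h 1 :=
    pos_of_mul_pos_right ((hlow.trans_lt' (by positivity)).trans_le hconv_s) hs0.le
  calc 1 / (48 * α ^ 2) ≤ h s := hlow
    _ ≤ s * h 1 := hconv_s
    _ ≤ h 1 := mul_le_of_le_one_left hh1.le hs1

lemma mul_sqrt_le_quarter {α x : ℝ} (hα : 0 < α) (hx : 0 ≤ x)
    (hxα : x ≤ 1 / (16 * α ^ 2)) : α * √x ≤ 1 / 4 := by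
  have hsq : (α * √x) ^ 2 ≤ (1 / 4) ^ 2 := by
    rw [mul_pow, sq_sqrt hx]
    linarith [(le_div_iff₀ (by positivity)).1 hxα]
  exact (pow_le_pow_iff_left₀ (by positivity) (by norm_num) two_ne_zero).1 hsq

theorem almost_strong_convexity_cumulant_general
    (α : ℝ) (hα : 0 < α) (c : ℕ → ℝ) (hc2 : 0 < c 2)
    (hgrowth : ∀ k : ℕ, 3 ≤ k →
      |c k| ≤ (1 / 2) * (k.factorial : ℝ) * α ^ (k - 2) * (c 2) ^ ((k : ℝ) / 2))
    (h : ℝ → ℝ) (hconv : ConvexOn ℝ (Set.Icc (0 : ℝ) 1) h)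
    (h0 : h 0 = 0)
    (hrep : ∀ s ∈ Set.Icc (0 : ℝ) 1,
      Summable (fun k : ℕ => |c (k + 2) * s ^ (k + 2) / ((k + 2).factorial : ℝ)|) →
      h s = ∑' k : ℕ, c (k + 2) * s ^ (k + 2) / ((k + 2).factorial : ℝ))
    (hpre : h 1 ≤ 1 / (65 * α ^ 2) ∨ c 2 ≤ 1 / (16 * α ^ 2)) :
    (1 / 4) * c 2 ≤ h 1 ∧ h 1 ≤ (3 / 4) * c 2 := by
  have hexp : HasCumulantExpansion h c := hrep
  have hβ : α * √(c 2) ≤ 1 / 4 := by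
    rcases hpre with hh1 | hc
    · by_contra! hβ
      have h48 := hexp.le_apply_one hα hgrowth hc2.le hconv h0 hβ
      have : 1 / (65 * α ^ 2) < 1 / (48 * α ^ 2) :=
        one_div_lt_one_div_of_lt (by positivity) (by nlinarith)
      linarith
    · exact mul_sqrt_le_quarter hα hc2.le hc
  have := hexp.abs_sub_le hα.le hgrowth hc2.le zero_le_one (by simpa using hβ) le_rfl
  obtain ⟨hlow, hupp⟩ := abs_le.1 this
  constructor <;> linarith

/-- Theorem 1 of the paper (Almost Strong Convexity), cumulant case, abstracted:
h(s) = L(θ⋆+sΔ) - L(θ⋆) is convex on [0,1], nonnegative, vanishes at 0 and equals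
∑_{k≥2} c_k s^k/k! whenever that series converges absolutely; if h(1) ≤ 1/(65α²) or
c 2 ≤ 1/(16α²), then (1/4)·c 2 ≤ h(1) ≤ (3/4)·c 2. -/
theorem almost_strong_convexity_cumulant
    (α : ℝ) (hα : 0 < α) (c : ℕ → ℝ) (hc2 : 0 < c 2)
    (hgrowth : ∀ k : ℕ, 3 ≤ k →
      |c k| ≤ (1 / 2) * (k.factorial : ℝ) * α ^ (k - 2) * (c 2) ^ ((k : ℝ) / 2))
    (h : ℝ → ℝ) (hconv : ConvexOn ℝ (Set.Icc (0 : ℝ) 1) h)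
    (h0 : h 0 = 0) (hnonneg : ∀ s ∈ Set.Icc (0 : ℝ) 1, 0 ≤ h s)
    (hrep : ∀ s ∈ Set.Icc (0 : ℝ) 1,
      Summable (fun k : ℕ => |c (k + 2) * s ^ (k + 2) / ((k + 2).factorial : ℝ)|) →
      h s = ∑' k : ℕ, c (k + 2) * s ^ (k + 2) / ((k + 2).factorial : ℝ))
    (hpre : h 1 ≤ 1 / (65 * α ^ 2) ∨ c 2 ≤ 1 / (16 * α ^ 2)) :
    (1 / 4) * c 2 ≤ h 1 ∧ h 1 ≤ (3 / 4) * c 2 :=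
  almost_strong_convexity_cumulant_general α hα c hc2 hgrowth h hconv h0 hrep hpre
end

section
/- Let α > 0 and let m : ℕ → ℝ satisfy m 2 > 0, m 4 ≥ (m 2)², and the analytic growth condition with constant α. Let h : ℝ → ℝ be convex on [0,1] with h(0) = 0 and h(s) ≥ 0 for all s ∈ [0,1], and suppose that for every s ∈ [0,1] at which the series ∑_{k≥2} m_k·s^k/k! converges absolutely, one has h(s) = log(1 + ∑_{k=2}^∞ m_k·s^k/k!). Then (1/4)·(m 2)/max{16·α²·(m 2), 1} ≤ h(1); moreover, if m 2 ≤ 1/(16·α²), then (1/4)·(m 2) ≤ h(1) ≤ (2/3)·(m 2). -/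
private lemma log_one_add_lb {x : ℝ} (h0 : 0 ≤ x) (h1 : x ≤ 1/2) :
    3/4 * x ≤ Real.log (1 + x) := by
  have hexp : Real.exp (3/4 * x) ≤ 1 + x := by
    have hb := Real.exp_bound (x := 3/4 * x)
      (by rw [abs_of_nonneg (by linarith)]; linarith) (n := 2) (by norm_num)
    rw [abs_of_nonneg (by linarith : (0:ℝ) ≤ 3/4 * x)] at hb
    have h2 : ∑ m ∈ Finset.range 2, (3/4*x) ^ m / (m.factorial : ℝ) = 1 + 3/4*x := by
      simp [Finset.sum_range_succ]
    rw [h2] at hb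
    norm_num [Nat.factorial] at hb
    have := (abs_sub_le_iff.1 hb).1
    nlinarith [sq_nonneg x]
  calc 3/4 * x = Real.log (Real.exp (3/4 * x)) := (Real.log_exp _).symm
    _ ≤ Real.log (1 + x) := Real.log_le_log (Real.exp_pos _) hexp

set_option maxHeartbeats 1000000 in
/-- Lemma 5 of the paper (moment case), abstracted: h(s) = L(θ⋆+sΔ) - L(θ⋆) is convex
on [0,1], nonnegative, vanishes at 0 and equals log(1 + ∑_{k≥2} m_k s^k/k!) whenever
the series converges absolutely. Then (1/4)·(m 2)/max{16α²(m 2),1} ≤ h(1); moreover,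
if m 2 ≤ 1/(16α²), then (1/4)·m 2 ≤ h(1) ≤ (2/3)·m 2. -/
theorem almost_strong_convexity_moment
    (α : ℝ) (hα : 0 < α) (m : ℕ → ℝ) (hm2 : 0 < m 2) (hm4 : (m 2) ^ 2 ≤ m 4)
    (hgrowth : ∀ k : ℕ, 3 ≤ k →
      |m k| ≤ (1 / 2) * (k.factorial : ℝ) * α ^ (k - 2) * (m 2) ^ ((k : ℝ) / 2))
    (h : ℝ → ℝ) (hconv : ConvexOn ℝ (Set.Icc (0 : ℝ) 1) h)
    (h0 : h 0 = 0) (hnonneg : ∀ s ∈ Set.Icc (0 : ℝ) 1, 0 ≤ h s)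
    (hrep : ∀ s ∈ Set.Icc (0 : ℝ) 1,
      Summable (fun k : ℕ => |m (k + 2) * s ^ (k + 2) / ((k + 2).factorial : ℝ)|) →
      h s = Real.log (1 + ∑' k : ℕ, m (k + 2) * s ^ (k + 2) / ((k + 2).factorial : ℝ))) :
    (1 / 4) * (m 2) / max (16 * α ^ 2 * m 2) 1 ≤ h 1 ∧
    (m 2 ≤ 1 / (16 * α ^ 2) →
      (1 / 4) * m 2 ≤ h 1 ∧ h 1 ≤ (2 / 3) * m 2) := by
  set σ : ℝ := Real.sqrt (m 2) with hσdef
  have hσ : 0 < σ := Real.sqrt_pos.mpr hm2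
  have hσ2 : σ ^ 2 = m 2 := Real.sq_sqrt hm2.le
  -- rpow to pow conversion
  have hrpow : ∀ k : ℕ, (m 2) ^ ((k : ℝ) / 2) = σ ^ k := by
    intro k
    rw [show ((k : ℝ) / 2) = (1/2) * (k : ℝ) by ring, Real.rpow_mul hm2.le,
      Real.rpow_natCast, hσdef, Real.sqrt_eq_rpow]
  -- α² ≥ 1/12 from the 4th moment
  have hα12 : 1 ≤ 12 * α ^ 2 := by
    have h4 := hgrowth 4 (by norm_num)
    rw [hrpow 4] at h4
    have : |m 4| = m 4 := abs_of_pos (lt_of_lt_of_le (by positivity) hm4)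
    rw [this] at h4
    have hfac : ((Nat.factorial 4 : ℕ) : ℝ) = 24 := by norm_num [Nat.factorial]
    rw [hfac] at h4
    have hσ4 : σ ^ 4 = (m 2) ^ 2 := by rw [show 4 = 2*2 by rfl, pow_mul, hσ2]
    rw [show (4 - 2 : ℕ) = 2 by rfl, hσ4] at h4
    have hp : 0 < m 2 ^ 2 := by positivity
    nlinarith [hp]
  -- Key estimate at allowed points
  have key : ∀ s : ℝ, 0 < s → s ≤ 1 → α * σ * s ≤ 1/4 →
      (1/4) * (m 2 * s ^ 2) ≤ h s ∧ h s ≤ 2/3 * (m 2 * s ^ 2) := by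
    intro s hs0 hs1 hc
    set c : ℝ := α * σ * s with hcdef
    have hc0 : 0 < c := by positivity
    set B : ℝ := m 2 * s ^ 2 / 2 with hBdef
    have hB0 : 0 < B := by positivity
    set f : ℕ → ℝ := fun k => m (k + 2) * s ^ (k + 2) / ((k + 2).factorial : ℝ) with hfdef
    have hf0 : f 0 = m 2 * s ^ 2 / 2 := by
      show m (0 + 2) * s ^ (0 + 2) / ((Nat.factorial (0 + 2) : ℕ) : ℝ) = m 2 * s ^ 2 / 2
      norm_num [Nat.factorial]
    have hbound : ∀ k : ℕ, |f k| ≤ B * c ^ k := by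
      intro k
      rcases Nat.eq_zero_or_pos k with hk0 | hkpos
      · subst hk0
        rw [pow_zero, mul_one, hf0, abs_of_pos (by positivity), hBdef]
      · have h3 : 3 ≤ k + 2 := by omega
        have hg := hgrowth (k + 2) h3
        rw [hrpow (k + 2), show (k + 2 - 2 : ℕ) = k by omega] at hg
        have hfacpos : (0:ℝ) < ((k+2).factorial : ℝ) := by positivity
        have habs : |f k| = |m (k + 2)| * s ^ (k + 2) / ((k + 2).factorial : ℝ) := by
          rw [hfdef]
          rw [abs_div, abs_mul, abs_of_pos (by positivity : (0:ℝ) < s ^ (k+2)),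
            abs_of_pos hfacpos]
        rw [habs]
        have step : |m (k + 2)| * s ^ (k + 2) / ((k + 2).factorial : ℝ)
            ≤ (1/2) * α ^ k * σ ^ (k + 2) * s ^ (k + 2) := by
          rw [div_le_iff₀ hfacpos]
          calc |m (k + 2)| * s ^ (k + 2)
              ≤ ((1/2) * ((k + 2).factorial : ℝ) * α ^ k * σ ^ (k + 2)) * s ^ (k + 2) := by
                apply mul_le_mul_of_nonneg_right hg (by positivity)
            _ = (1/2) * α ^ k * σ ^ (k + 2) * s ^ (k + 2) * ((k + 2).factorial : ℝ) := by
                ring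
        refine step.trans (le_of_eq ?_)
        have hBC : B * c ^ k = (1/2) * (σ ^ 2 * s ^ 2) * (α ^ k * σ ^ k * s ^ k) := by
          rw [hBdef, hcdef, mul_pow, mul_pow, hσ2]; ring
        rw [hBC, pow_add, pow_add]; ring
    have hcle : c ≤ 1/4 := hc
    have hgeo : Summable (fun k : ℕ => B * c ^ k) :=
      (summable_geometric_of_lt_one hc0.le (by linarith)).mul_left B
    have habs_sum : Summable (fun k : ℕ => |f k|) :=
      Summable.of_nonneg_of_le (fun k => abs_nonneg _) hbound hgeo
    have hf_sum : Summable f := habs_sum.of_abs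
    set S : ℝ := ∑' k : ℕ, f k with hSdef
    -- split off the first term
    have hsplit : S = f 0 + ∑' k : ℕ, f (k + 1) := Summable.tsum_eq_zero_add hf_sum
    have habs_shift : Summable (fun k : ℕ => |f (k + 1)|) :=
      (summable_nat_add_iff (f := fun k : ℕ => |f k|) 1).mpr habs_sum
    have hgeo_shift : Summable (fun k : ℕ => B * c ^ (k + 1)) :=
      (summable_nat_add_iff (f := fun k : ℕ => B * c ^ k) 1).mpr hgeo
    have hT : |∑' k : ℕ, f (k + 1)| ≤ B * c / (1 - c) := by
      have h1 : |∑' k : ℕ, f (k + 1)| ≤ ∑' k : ℕ, |f (k + 1)| := by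
        simpa using norm_tsum_le_tsum_norm (f := fun k => f (k + 1)) (by simpa using habs_shift)
      have h2 : ∑' k : ℕ, |f (k + 1)| ≤ ∑' k : ℕ, B * c ^ (k + 1) :=
        Summable.tsum_le_tsum (fun k => hbound (k + 1)) habs_shift hgeo_shift
      have h3 : ∑' k : ℕ, B * c ^ (k + 1) = B * c / (1 - c) := by
        have : (fun k : ℕ => B * c ^ (k + 1)) = fun k : ℕ => (B * c) * c ^ k := by
          funext k; rw [pow_succ]; ring
        rw [this, tsum_mul_left, tsum_geometric_of_lt_one hc0.le (by linarith)]
        field_simp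
      linarith [h1.trans (h2.trans_eq h3)]
    have hTle : |∑' k : ℕ, f (k + 1)| ≤ B / 3 := by
      refine hT.trans ?_
      rw [div_le_div_iff₀ (by linarith) (by norm_num)]
      nlinarith
    have hSlb : m 2 * s ^ 2 / 3 ≤ S := by
      have := abs_le.1 hTle
      rw [hsplit, hf0]; linarith [this.1, hBdef]
    have hSub : S ≤ 2/3 * (m 2 * s ^ 2) := by
      have := abs_le.1 hTle
      rw [hsplit, hf0]; linarith [this.2, hBdef]
    have hS0 : 0 < S := lt_of_lt_of_le (by positivity) hSlb
    -- m2 s² ≤ 3/4 hence S ≤ 1/2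
    have hms : m 2 * s ^ 2 ≤ 3/4 := by
      have h1 : (σ * s) ^ 2 = m 2 * s ^ 2 := by rw [mul_pow, hσ2]
      have h2 : (α * (σ * s)) ^ 2 ≤ (1/4) ^ 2 := by
        have : 0 < α * (σ * s) := by positivity
        nlinarith [hc]
      nlinarith [sq_nonneg α, sq_nonneg (σ * s), hα12]
    have hShalf : S ≤ 1/2 := by linarith
    have hrepr : h s = Real.log (1 + S) := hrep s ⟨hs0.le, hs1⟩ habs_sum
    constructor
    · rw [hrepr]
      calc (1/4) * (m 2 * s ^ 2) ≤ 3/4 * S := by linarith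
        _ ≤ Real.log (1 + S) := log_one_add_lb hS0.le hShalf
    · rw [hrepr]
      have := Real.log_le_sub_one_of_pos (show (0:ℝ) < 1 + S by linarith)
      linarith
  -- convexity: h s₀ ≤ s₀ * h 1
  have hcvx : ∀ s : ℝ, 0 ≤ s → s ≤ 1 → h s ≤ s * h 1 := by
    intro s hs0 hs1
    have := hconv.2 (Set.left_mem_Icc.mpr zero_le_one) (Set.right_mem_Icc.mpr zero_le_one)
      (by linarith : (0:ℝ) ≤ 1 - s) hs0 (by ring)
    simpa [h0] using this
  constructor
  · -- first claim
    rcases le_or_gt (16 * α ^ 2 * m 2) 1 with hcase | hcase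
    · rw [max_eq_right hcase]
      have e : (α * σ) ^ 2 ≤ (1/4) ^ 2 := by
        rw [mul_pow, hσ2]; nlinarith [hcase]
      have hασ : α * σ * 1 ≤ 1/4 := by
        rw [mul_one]
        nlinarith [e, mul_pos hα hσ]
      have := (key 1 one_pos le_rfl hασ).1
      simpa using this
    · rw [max_eq_left hcase.le]
      set s₀ : ℝ := 1 / (4 * α * σ) with hs₀def
      have hs₀0 : 0 < s₀ := by positivity
      have e2 : 1 ≤ (4 * α * σ) ^ 2 := by
        have : (4 * α * σ) ^ 2 = 16 * α ^ 2 * m 2 := by rw [mul_pow, mul_pow, hσ2]; ring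
        rw [this]; linarith
      have h4ασ : 1 ≤ 4 * α * σ := by
        nlinarith [e2, mul_pos hα hσ]
      have hs₀1 : s₀ ≤ 1 := by
        rw [hs₀def, div_le_one (by positivity)]; exact h4ασ
      have hs₀eq : 4 * α * σ * s₀ = 1 := by
        rw [hs₀def]; field_simp
      have hckey := key s₀ hs₀0 hs₀1 (by linarith [hs₀eq])
      have h1 := hckey.1
      have h2 := hcvx s₀ hs₀0.le hs₀1
      -- h 1 ≥ (1/4) m2 s₀
      have hh1 : (1/4) * (m 2 * s₀) ≤ h 1 := by
        have : (1/4) * (m 2 * s₀ ^ 2) ≤ s₀ * h 1 := le_trans h1 h2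
        nlinarith [hs₀0]
      -- (1/4) m2 s₀ = σ/(16α) ≥ 1/(64α²) = goal
      have hdiveq : (1/4) * (m 2) / (16 * α ^ 2 * m 2) = 1/(64 * α ^ 2) := by
        field_simp
        ring
      have hσs₀ : σ * s₀ = 1/(4*α) := by
        rw [hs₀def, mul_one_div, div_eq_div_iff (by positivity) (by positivity)]
        ring
      have hms₀ : m 2 * s₀ = σ * (1/(4*α)) := by
        rw [← hσ2, ← hσs₀]; ring
      have hfin : 1/(64 * α ^ 2) ≤ (1/4) * (m 2 * s₀) := by
        rw [hms₀]
        rw [div_le_iff₀ (by positivity)]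
        nlinarith [mul_le_mul_of_nonneg_left h4ασ (by positivity : (0:ℝ) ≤ σ)]
      rw [hdiveq]
      exact hfin.trans hh1
  · intro hsmall
    have hασ : α * σ * 1 ≤ 1/4 := by
      rw [mul_one]
      have ham : α ^ 2 * m 2 ≤ 1/16 := by
        rw [le_div_iff₀ (by positivity)] at hsmall
        nlinarith
      have e : (α * σ) ^ 2 ≤ (1/4) ^ 2 := by
        rw [mul_pow, hσ2]; nlinarith [ham]
      nlinarith [e, mul_pos hα hσ]
    have := key 1 one_pos le_rfl hασ
    constructor
    · have := this.1; simpa using this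
    · have := this.2; simpa using this
end

section
/- Fix p ∈ ℕ, T, T̂ ∈ ℝ^p, F : ℝ^p → ℝ, and λ > 0 with ‖T - T̂‖_∞ ≤ λ/2. Let θ̂ ∈ ℝ^p satisfy L̂(θ̂) + λ‖θ̂‖₁ ≤ L̂(θ) + λ‖θ‖₁ for all θ ∈ ℝ^p. Then for every θ ∈ ℝ^p: L(θ̂) - L(θ) ≤ (λ/2)·‖θ̂ - θ‖₁ + λ‖θ‖₁ - λ‖θ̂‖₁ ≤ (3λ/2)·‖θ‖₁. Moreover, if S ⊆ {1,…,p} and θ_i = 0 for all i ∉ S, then L(θ̂) - L(θ) ≤ (3λ/2)·‖θ̂_S - θ‖₁. -/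
open Finset

/-- Lemma 6 of the paper: basic regret bounds for the L₁-regularized empirical
minimizer. L(θ) = -⟨θ,T⟩ + F(θ) is the population loss and L̂(θ) = -⟨θ,T̂⟩ + F(θ) the
empirical loss. -/
theorem l1_regularized_regret_bounds
    (p : ℕ) (T That : Fin p → ℝ) (F : (Fin p → ℝ) → ℝ)
    (L Lhat : (Fin p → ℝ) → ℝ)
    (hL : ∀ θ, L θ = -(∑ i, θ i * T i) + F θ)
    (hLhat : ∀ θ, Lhat θ = -(∑ i, θ i * That i) + F θ)
    (lam : ℝ) (hlam : 0 < lam)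
    (hinf : ∀ i, |T i - That i| ≤ lam / 2)
    (θhat : Fin p → ℝ)
    (hmin : ∀ θ, Lhat θhat + lam * ∑ i, |θhat i| ≤ Lhat θ + lam * ∑ i, |θ i|) :
    ∀ θ : Fin p → ℝ,
      (L θhat - L θ ≤
          (lam / 2) * (∑ i, |θhat i - θ i|) + lam * (∑ i, |θ i|) - lam * ∑ i, |θhat i| ∧
        (lam / 2) * (∑ i, |θhat i - θ i|) + lam * (∑ i, |θ i|) - lam * (∑ i, |θhat i|) ≤
          (3 * lam / 2) * ∑ i, |θ i|) ∧
      ∀ S : Finset (Fin p), (∀ i ∉ S, θ i = 0) →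
        L θhat - L θ ≤ (3 * lam / 2) * ∑ i, |(if i ∈ S then θhat i else 0) - θ i| := by
  intro θ
  -- the inner-product correction term
  have hE : L θhat - L θ = (Lhat θhat - Lhat θ) + ∑ i, (θhat i - θ i) * (That i - T i) := by
    have : ∑ i, (θhat i - θ i) * (That i - T i)
        = ((∑ i, θhat i * That i) - ∑ i, θhat i * T i)
          - ((∑ i, θ i * That i) - ∑ i, θ i * T i) := by
      rw [← Finset.sum_sub_distrib, ← Finset.sum_sub_distrib, ← Finset.sum_sub_distrib]
      exact Finset.sum_congr rfl fun i _ => by ring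
    rw [hL, hL, hLhat, hLhat, this]; ring
  have h1 : ∑ i, (θhat i - θ i) * (That i - T i) ≤ (lam / 2) * ∑ i, |θhat i - θ i| := by
    rw [Finset.mul_sum]
    refine Finset.sum_le_sum fun i _ => ?_
    calc (θhat i - θ i) * (That i - T i) ≤ |(θhat i - θ i) * (That i - T i)| := le_abs_self _
      _ = |θhat i - θ i| * |That i - T i| := abs_mul _ _
      _ ≤ |θhat i - θ i| * (lam / 2) := by
          have := hinf i
          rw [abs_sub_comm] at this
          exact mul_le_mul_of_nonneg_left this (abs_nonneg _)
      _ = (lam / 2) * |θhat i - θ i| := mul_comm _ _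
  have hminθ := hmin θ
  have part1 : L θhat - L θ ≤
      (lam / 2) * (∑ i, |θhat i - θ i|) + lam * (∑ i, |θ i|) - lam * ∑ i, |θhat i| := by
    rw [hE]; linarith
  have hA0 : (0:ℝ) ≤ ∑ i, |θhat i| := Finset.sum_nonneg fun i _ => abs_nonneg _
  have hD : ∑ i, |θhat i - θ i| ≤ (∑ i, |θhat i|) + ∑ i, |θ i| := by
    rw [← Finset.sum_add_distrib]
    exact Finset.sum_le_sum fun i _ => abs_sub (θhat i) (θ i)
  refine ⟨⟨part1, by nlinarith⟩, ?_⟩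
  intro S hS
  -- split sums over S and its complement
  have hsplitA : ∑ i, |θhat i| = (∑ i ∈ S, |θhat i|) + ∑ i ∈ Sᶜ, |θhat i| :=
    (Finset.sum_add_sum_compl S _).symm
  have hsplitB : ∑ i, |θ i| = ∑ i ∈ S, |θ i| := by
    rw [← Finset.sum_add_sum_compl S fun i => |θ i|]
    have : ∑ i ∈ Sᶜ, |θ i| = 0 :=
      Finset.sum_eq_zero fun i hi => by
        rw [hS i (Finset.mem_compl.mp hi), abs_zero]
    rw [this, add_zero]
  have hsplitD : ∑ i, |θhat i - θ i|
      = (∑ i ∈ S, |θhat i - θ i|) + ∑ i ∈ Sᶜ, |θhat i| := by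
    rw [← Finset.sum_add_sum_compl S fun i => |θhat i - θ i|]
    congr 1
    exact Finset.sum_congr rfl fun i hi => by
      rw [hS i (Finset.mem_compl.mp hi), sub_zero]
  have hR : ∑ i, |(if i ∈ S then θhat i else 0) - θ i| = ∑ i ∈ S, |θhat i - θ i| := by
    rw [← Finset.sum_add_sum_compl S fun i => |(if i ∈ S then θhat i else 0) - θ i|]
    have hz : ∑ i ∈ Sᶜ, |(if i ∈ S then θhat i else 0) - θ i| = 0 :=
      Finset.sum_eq_zero fun i hi => by
        have hni := Finset.mem_compl.mp hi
        rw [if_neg hni, hS i hni, sub_zero, abs_zero]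
    rw [hz, add_zero]
    exact Finset.sum_congr rfl fun i hi => by rw [if_pos hi]
  have hBA : (∑ i ∈ S, |θ i|) - (∑ i ∈ S, |θhat i|) ≤ ∑ i ∈ S, |θhat i - θ i| := by
    rw [← Finset.sum_sub_distrib]
    refine Finset.sum_le_sum fun i _ => ?_
    calc |θ i| - |θhat i| ≤ |θ i - θhat i| := abs_sub_abs_le_abs_sub _ _
      _ = |θhat i - θ i| := abs_sub_comm _ _
  have hC0 : (0:ℝ) ≤ ∑ i ∈ Sᶜ, |θhat i| := Finset.sum_nonneg fun i _ => abs_nonneg _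
  rw [hR]
  have := part1
  rw [hsplitA, hsplitB, hsplitD] at this
  nlinarith
end

section
/- Fix p ∈ ℕ, T, T̂ ∈ ℝ^p, F : ℝ^p → ℝ, and λ > 0 with ‖T - T̂‖_∞ ≤ λ/2. Let θ̂ ∈ ℝ^p satisfy L̂(θ̂) + λ‖θ̂‖₁ ≤ L̂(θ') + λ‖θ'‖₁ for all θ' ∈ ℝ^p. Let S ⊆ {1,…,p} and let θ ∈ ℝ^p satisfy θ_i = 0 for all i ∉ S and L(θ̂) ≥ L(θ). Then ‖θ̂_{S^C}‖₁ ≤ 3·‖θ̂_S - θ‖₁ and ‖θ̂ - θ‖₁ ≤ 4·‖θ̂_S - θ‖₁. -/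
open Finset

/-- Lemma 7 of the paper: the error of the L₁-regularized estimator lies in the cone
{δ : ‖δ_{S^C}‖₁ ≤ 3‖δ_S‖₁}. -/
theorem l1_regularized_cone_condition
    (p : ℕ) (T That : Fin p → ℝ) (F : (Fin p → ℝ) → ℝ)
    (L Lhat : (Fin p → ℝ) → ℝ)
    (hL : ∀ θ, L θ = -(∑ i, θ i * T i) + F θ)
    (hLhat : ∀ θ, Lhat θ = -(∑ i, θ i * That i) + F θ)
    (lam : ℝ) (hlam : 0 < lam)
    (hinf : ∀ i, |T i - That i| ≤ lam / 2)
    (θhat : Fin p → ℝ)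
    (hmin : ∀ θ', Lhat θhat + lam * ∑ i, |θhat i| ≤ Lhat θ' + lam * ∑ i, |θ' i|)
    (S : Finset (Fin p)) (θ : Fin p → ℝ)
    (hsupp : ∀ i ∉ S, θ i = 0) (hloss : L θ ≤ L θhat) :
    (∑ i ∈ Sᶜ, |θhat i|) ≤ 3 * ∑ i ∈ S, |θhat i - θ i| ∧
    (∑ i, |θhat i - θ i|) ≤ 4 * ∑ i ∈ S, |θhat i - θ i| := by
  have hmin' := hmin θ
  rw [hLhat θhat, hLhat θ] at hmin'
  rw [hL θ, hL θhat] at hloss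
  -- key inequality
  have hexp : ∑ i, (θhat i - θ i) * (That i - T i)
      = ((∑ i, θhat i * That i) - ∑ i, θ i * That i)
        - ((∑ i, θhat i * T i) - ∑ i, θ i * T i) := by
    rw [← Finset.sum_sub_distrib, ← Finset.sum_sub_distrib, ← Finset.sum_sub_distrib]
    exact Finset.sum_congr rfl fun i _ => by ring
  have key : lam * ∑ i, |θhat i| ≤ lam * ∑ i, |θ i|
      + ∑ i, (θhat i - θ i) * (That i - T i) := by
    rw [hexp]; linarith
  have hbound : ∑ i, (θhat i - θ i) * (That i - T i)
      ≤ (lam / 2) * ∑ i, |θhat i - θ i| := by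
    rw [Finset.mul_sum]
    apply Finset.sum_le_sum
    intro i _
    calc (θhat i - θ i) * (That i - T i) ≤ |(θhat i - θ i) * (That i - T i)| := le_abs_self _
      _ = |θhat i - θ i| * |That i - T i| := abs_mul _ _
      _ ≤ |θhat i - θ i| * (lam / 2) := by
          apply mul_le_mul_of_nonneg_left _ (abs_nonneg _)
          rw [abs_sub_comm]; exact hinf i
      _ = lam / 2 * |θhat i - θ i| := by ring
  -- splits
  have hsplit1 : ∑ i, |θhat i| = (∑ i ∈ S, |θhat i|) + ∑ i ∈ Sᶜ, |θhat i| :=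
    (Finset.sum_add_sum_compl S _).symm
  have hsplit2 : ∑ i, |θhat i - θ i|
      = (∑ i ∈ S, |θhat i - θ i|) + ∑ i ∈ Sᶜ, |θhat i - θ i| :=
    (Finset.sum_add_sum_compl S _).symm
  have hceq : ∑ i ∈ Sᶜ, |θhat i - θ i| = ∑ i ∈ Sᶜ, |θhat i| := by
    apply Finset.sum_congr rfl
    intro i hi
    rw [hsupp i (Finset.mem_compl.mp hi), sub_zero]
  have hθeq : ∑ i, |θ i| = ∑ i ∈ S, |θ i| := by
    rw [← Finset.sum_add_sum_compl S fun i => |θ i|]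
    have : ∑ i ∈ Sᶜ, |θ i| = 0 := by
      apply Finset.sum_eq_zero
      intro i hi
      rw [hsupp i (Finset.mem_compl.mp hi), abs_zero]
    rw [this, add_zero]
  have htri : ∑ i ∈ S, |θ i| ≤ (∑ i ∈ S, |θhat i|) + ∑ i ∈ S, |θhat i - θ i| := by
    rw [← Finset.sum_add_distrib]
    apply Finset.sum_le_sum
    intro i _
    calc |θ i| = |θhat i - (θhat i - θ i)| := by ring_nf
      _ ≤ |θhat i| + |θhat i - θ i| := abs_sub _ _
  set A := ∑ i ∈ S, |θhat i - θ i|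
  set B := ∑ i ∈ Sᶜ, |θhat i|
  rw [hsplit2, hceq] at hbound
  rw [hsplit1, hθeq] at key
  have hB3A : B ≤ 3 * A := by
    have h2 : lam * B ≤ lam * (3 * A) := by nlinarith
    exact le_of_mul_le_mul_left h2 hlam
  refine ⟨hB3A, ?_⟩
  rw [hsplit2, hceq]
  linarith
end

section
/- Fix p, s ∈ ℕ, S ⊆ {1,…,p} with |S| = s, T, T̂ ∈ ℝ^p, F : ℝ^p → ℝ, a matrix Q ∈ ℝ^{p×p}, and constants λ > 0, α > 0, κmin > 0. Assume: (i) θ⋆ ∈ ℝ^p is a global minimizer of L (i.e. L(θ⋆) ≤ L(θ) for all θ) with θ⋆_i = 0 for all i ∉ S; (ii) restricted eigenvalue: for every δ ∈ ℝ^p with ‖δ_{S^C}‖₁ ≤ 3‖δ_S‖₁, one has ‖δ‖_Q² ≥ κmin²·‖δ_S‖₂²; (iii) strong convexity: for every θ ∈ ℝ^p with ‖(θ-θ⋆)_{S^C}‖₁ ≤ 3‖(θ-θ⋆)_S‖₁ and L(θ) - L(θ⋆) ≤ 1/(65α²), one has (1/4)·‖θ-θ⋆‖_Q² ≤ L(θ)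 - L(θ⋆); (iv) ‖T - T̂‖_∞ ≤ λ/2 and λ·100·α²·‖θ⋆‖₁ ≤ 1; (v) θ̂ minimizes L̂(θ) + λ‖θ‖₁ over ℝ^p. Then (1/4)·‖θ̂-θ⋆‖_Q² ≤ L(θ̂) - L(θ⋆) ≤ 9·s·λ²/κmin², and ‖θ̂ - θ⋆‖₁ ≤ 24·s·λ/κmin². -/
open Finset

set_option maxHeartbeats 1000000 in
/-- Theorem 2 of the paper (Risk): under the restricted eigenvalue condition and the
almost-strong-convexity conclusion of Theorem 1, the L₁-regularized estimator satisfies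
(1/4)‖θ̂-θ⋆‖_Q² ≤ L(θ̂) - L(θ⋆) ≤ 9sλ²/κmin² and ‖θ̂-θ⋆‖₁ ≤ 24sλ/κmin². -/
theorem l1_regularized_risk_bound
    (p s : ℕ) (S : Finset (Fin p)) (hS : S.card = s)
    (T That : Fin p → ℝ) (F : (Fin p → ℝ) → ℝ)
    (L Lhat : (Fin p → ℝ) → ℝ)
    (hL : ∀ θ, L θ = -(∑ i, θ i * T i) + F θ)
    (hLhat : ∀ θ, Lhat θ = -(∑ i, θ i * That i) + F θ)
    (Q : Matrix (Fin p) (Fin p) ℝ)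
    (QF : (Fin p → ℝ) → ℝ) (hQF : ∀ v, QF v = ∑ i, ∑ j, v i * Q i j * v j)
    (lam α κmin : ℝ) (hlam : 0 < lam) (hα : 0 < α) (hκ : 0 < κmin)
    (θstar : Fin p → ℝ)
    (hopt : ∀ θ, L θstar ≤ L θ)
    (hstarsupp : ∀ i ∉ S, θstar i = 0)
    (hRE : ∀ δ : Fin p → ℝ,
      (∑ i ∈ Sᶜ, |δ i|) ≤ 3 * ∑ i ∈ S, |δ i| →
      κmin ^ 2 * ∑ i ∈ S, (δ i) ^ 2 ≤ QF δ)
    (hSC : ∀ θ : Fin p → ℝ,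
      (∑ i ∈ Sᶜ, |θ i - θstar i|) ≤ 3 * (∑ i ∈ S, |θ i - θstar i|) →
      L θ - L θstar ≤ 1 / (65 * α ^ 2) →
      (1 / 4) * QF (fun i => θ i - θstar i) ≤ L θ - L θstar)
    (hinf : ∀ i, |T i - That i| ≤ lam / 2)
    (hlam2 : lam * (100 * α ^ 2 * ∑ i, |θstar i|) ≤ 1)
    (θhat : Fin p → ℝ)
    (hmin : ∀ θ, Lhat θhat + lam * ∑ i, |θhat i| ≤ Lhat θ + lam * ∑ i, |θ i|) :
    (1 / 4) * QF (fun i => θhat i - θstar i) ≤ L θhat - L θstar ∧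
    L θhat - L θstar ≤ 9 * s * lam ^ 2 / κmin ^ 2 ∧
    (∑ i, |θhat i - θstar i|) ≤ 24 * s * lam / κmin ^ 2 := by
  set D := L θhat - L θstar with hDdef
  set a := ∑ i ∈ S, |θhat i - θstar i| with hadef
  set b := ∑ i ∈ Sᶜ, |θhat i - θstar i| with hbdef
  have ha0 : 0 ≤ a := Finset.sum_nonneg fun i _ => abs_nonneg _
  have hb0 : 0 ≤ b := Finset.sum_nonneg fun i _ => abs_nonneg _
  have hD0 : 0 ≤ D := by have := hopt θhat; simp [hDdef]; linarith
  -- decomposition of full sums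
  have hδsplit : (∑ i, |θhat i - θstar i|) = a + b :=
    (Finset.sum_add_sum_compl S _).symm
  -- relation between L and Lhat differences
  have hsum : ∑ i, (θhat i - θstar i) * (That i - T i)
      = ((∑ i, θstar i * T i) - (∑ i, θhat i * T i))
        - ((∑ i, θstar i * That i) - (∑ i, θhat i * That i)) := by
    rw [← Finset.sum_sub_distrib, ← Finset.sum_sub_distrib, ← Finset.sum_sub_distrib]
    exact Finset.sum_congr rfl fun i _ => by ring
  have hLL : D = (Lhat θhat - Lhat θstar)
      + ∑ i, (θhat i - θstar i) * (That i - T i) := by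
    have e1 := hL θhat; have e2 := hL θstar
    have e3 := hLhat θhat; have e4 := hLhat θstar
    rw [hDdef]; linarith [hsum]
  -- noise bound
  have hnoise : ∑ i, (θhat i - θstar i) * (That i - T i)
      ≤ lam / 2 * ∑ i, |θhat i - θstar i| := by
    rw [Finset.mul_sum]
    refine Finset.sum_le_sum fun i _ => ?_
    calc (θhat i - θstar i) * (That i - T i)
        ≤ |(θhat i - θstar i) * (That i - T i)| := le_abs_self _
      _ = |θhat i - θstar i| * |That i - T i| := abs_mul _ _
      _ ≤ |θhat i - θstar i| * (lam / 2) := by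
          refine mul_le_mul_of_nonneg_left ?_ (abs_nonneg _)
          rw [abs_sub_comm]; exact hinf i
      _ = lam / 2 * |θhat i - θstar i| := mul_comm _ _
  have hbasic := hmin θstar
  have key1 : D ≤ lam * (∑ i, |θstar i|) - lam * (∑ i, |θhat i|)
      + lam / 2 * ∑ i, |θhat i - θstar i| := by
    linarith [hLL, hnoise, hbasic]
  -- l1 norm decompositions
  have hstar_sum : (∑ i, |θstar i|) = ∑ i ∈ S, |θstar i| := by
    rw [← Finset.sum_add_sum_compl S (fun i => |θstar i|)]
    have : ∑ i ∈ Sᶜ, |θstar i| = 0 :=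
      Finset.sum_eq_zero fun i hi => by
        rw [hstarsupp i (Finset.mem_compl.mp hi), abs_zero]
    rw [this, add_zero]
  have hhat_sum : (∑ i, |θhat i|) = (∑ i ∈ S, |θhat i|) + ∑ i ∈ Sᶜ, |θhat i| :=
    (Finset.sum_add_sum_compl S _).symm
  have hScb : (∑ i ∈ Sᶜ, |θhat i|) = b :=
    Finset.sum_congr rfl fun i hi => by
      rw [hstarsupp i (Finset.mem_compl.mp hi), sub_zero]
  have hStri : (∑ i ∈ S, |θstar i|) - (∑ i ∈ S, |θhat i|) ≤ a := by
    rw [← Finset.sum_sub_distrib]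
    refine Finset.sum_le_sum fun i _ => ?_
    calc |θstar i| - |θhat i| ≤ |θstar i - θhat i| := abs_sub_abs_le_abs_sub _ _
      _ = |θhat i - θstar i| := abs_sub_comm _ _
  have hn : (∑ i, |θstar i|) - (∑ i, |θhat i|) ≤ a - b := by
    rw [hstar_sum, hhat_sum, hScb]; linarith
  have fact1 : D ≤ 3 / 2 * lam * a - 1 / 2 * lam * b := by
    have hmul := mul_le_mul_of_nonneg_left hn hlam.le
    nlinarith [key1, hδsplit]
  have cone : b ≤ 3 * a := by nlinarith [fact1, hD0, hlam]
  -- D is small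
  have hP0 : 0 ≤ ∑ i, |θstar i| := Finset.sum_nonneg fun i _ => abs_nonneg _
  have hQ0 : 0 ≤ ∑ i, |θhat i| := Finset.sum_nonneg fun i _ => abs_nonneg _
  have htri : (∑ i, |θhat i - θstar i|) ≤ (∑ i, |θhat i|) + ∑ i, |θstar i| := by
    rw [← Finset.sum_add_distrib]
    refine Finset.sum_le_sum fun i _ => ?_
    calc |θhat i - θstar i| = |θhat i + -θstar i| := by rw [sub_eq_add_neg]
      _ ≤ |θhat i| + |-θstar i| := abs_add_le _ _
      _ = |θhat i| + |θstar i| := by rw [abs_neg]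
  have h1 : D ≤ 3 / 2 * lam * ∑ i, |θstar i| := by
    have hmul := mul_le_mul_of_nonneg_left htri (by linarith : (0:ℝ) ≤ lam / 2)
    have hmul2 := mul_le_mul_of_nonneg_left hQ0 hlam.le
    nlinarith [key1]
  have hsmall : D ≤ 1 / (65 * α ^ 2) := by
    rw [le_div_iff₀ (by positivity)]
    have hα2 : (0:ℝ) < α ^ 2 := by positivity
    nlinarith [mul_le_mul_of_nonneg_left h1 hα2.le,
      mul_nonneg (mul_nonneg hα2.le hlam.le) hP0]
  -- strong convexity conclusion
  have hSCres : (1 / 4) * QF (fun i => θhat i - θstar i) ≤ D := hSC θhat cone hsmall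
  have hREres : κmin ^ 2 * ∑ i ∈ S, (θhat i - θstar i) ^ 2
      ≤ QF (fun i => θhat i - θstar i) := hRE (fun i => θhat i - θstar i) cone
  -- Cauchy-Schwarz
  have hCS : a ^ 2 ≤ (s : ℝ) * ∑ i ∈ S, (θhat i - θstar i) ^ 2 := by
    have h := sq_sum_le_card_mul_sum_sq (s := S)
      (f := fun i => |θhat i - θstar i|)
    simp only [sq_abs] at h
    rw [hS] at h
    exact h
  set W := ∑ i ∈ S, (θhat i - θstar i) ^ 2 with hWdef
  have hW0 : 0 ≤ W := Finset.sum_nonneg fun i _ => sq_nonneg _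
  have hQ4 : κmin ^ 2 * W ≤ 4 * D := by linarith
  have hDa : D ≤ 3 / 2 * lam * a := by linarith [fact1, mul_nonneg hlam.le hb0]
  have hκ2 : (0:ℝ) < κmin ^ 2 := by positivity
  have hs0 : (0:ℝ) ≤ (s : ℝ) := Nat.cast_nonneg s
  -- key quadratic inequality: κ² a ≤ 6 s λ  (or a = 0)
  have hka : κmin ^ 2 * a ≤ 6 * s * lam := by
    rcases eq_or_lt_of_le ha0 with h0 | hpos
    · rw [← h0, mul_zero]; positivity
    · have c1 : κmin ^ 2 * a ^ 2 ≤ κmin ^ 2 * ((s : ℝ) * W) :=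
        mul_le_mul_of_nonneg_left hCS hκ2.le
      have c2 : (s : ℝ) * (κmin ^ 2 * W) ≤ (s : ℝ) * (4 * D) :=
        mul_le_mul_of_nonneg_left hQ4 hs0
      have c3 : (s : ℝ) * (4 * D) ≤ (s : ℝ) * (4 * (3 / 2 * lam * a)) := by
        have : 4 * D ≤ 4 * (3 / 2 * lam * a) := by linarith
        exact mul_le_mul_of_nonneg_left this hs0
      have c4 : κmin ^ 2 * a ^ 2 ≤ 6 * s * lam * a := by nlinarith
      nlinarith [c4, hpos]
  refine ⟨hSCres, ?_, ?_⟩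
  · rw [le_div_iff₀ hκ2]
    have g2 : κmin ^ 2 * D ≤ 9 * (s : ℝ) * lam ^ 2 := by
      calc κmin ^ 2 * D ≤ κmin ^ 2 * (3 / 2 * lam * a) :=
            mul_le_mul_of_nonneg_left hDa hκ2.le
        _ = 3 / 2 * lam * (κmin ^ 2 * a) := by ring
        _ ≤ 3 / 2 * lam * (6 * (s : ℝ) * lam) :=
            mul_le_mul_of_nonneg_left hka (by linarith)
        _ = 9 * (s : ℝ) * lam ^ 2 := by ring
    linarith [g2]
  · rw [hδsplit, le_div_iff₀ hκ2]
    linarith [hka, mul_le_mul_of_nonneg_left cone hκ2.le]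
end

section
/- Fix p, s ∈ ℕ with s ≥ 1, S ⊆ {1,…,p} with |S| = s, T, T̂ ∈ ℝ^p, F : ℝ^p → ℝ, a matrix Q ∈ ℝ^{p×p}, and constants λ > 0, α > 0, κmin > 0, κmax > 0. Assume: (i) θ⋆ ∈ ℝ^p is a global minimizer of L with θ⋆_i = 0 for all i ∉ S; (ii) for every δ ∈ ℝ^p with ‖δ_{S^C}‖₁ ≤ 3‖δ_S‖₁, ‖δ‖_Q² ≥ κmin²·‖δ_S‖₂², and for every δ with δ_i = 0 for all i ∉ S, ‖δ‖_Q² ≤ κmax²·‖δ_S‖₂²; (iii) strong convexity sandwich: for every θ ∈ ℝ^p, if L(θ) - L(θ⋆) ≤ 1/(65α²) then (1/4)·‖θ-θ⋆‖_Q² ≤ L(θ) - L(θ⋆), and if ‖θ-θ⋆‖_Q² ≤ 1/(16α²) then L(θ) - L(θ⋆) ≤ (3/4)·‖θ-θ⋆‖_Q²; (iv) ‖T - T̂‖_∞ ≤ λ/2, λ·270·α²·‖θ⋆‖₁ ≤ 1, and λ·340·κmax·α·√s ≤ κmin²; (v) θ̂ minimizes L̂(θ) + λ‖θ‖₁ over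 ℝ^p; (vi) with threshold τ = 18λ/κmin² and Θ_τ = {θ ∈ ℝ^p : θ_i = 0 whenever |θ̂_i| ≤ τ}, θ̃ minimizes L̂(θ) + λ‖θ‖₁ over Θ_τ. Then: (1) θ̃ has at most 2s nonzero coordinates; (2) (1/4)·‖θ̃-θ⋆‖_Q² ≤ L(θ̃) - L(θ⋆) ≤ (12·κmax/κmin)²·9·s·λ²/κmin². -/
open Finset

set_option maxHeartbeats 1000000

/-- Theorem 3 of the paper (approximate model selection by thresholding and refitting):
the refitted estimator θ̃ has support of size at most 2s and satisfies
(1/4)‖θ̃-θ⋆‖_Q² ≤ L(θ̃) - L(θ⋆) ≤ (12κmax/κmin)²·9sλ²/κmin². -/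
theorem threshold_refit_sparsity_and_risk
    (p s : ℕ) (hs : 1 ≤ s) (S : Finset (Fin p)) (hS : S.card = s)
    (T That : Fin p → ℝ) (F : (Fin p → ℝ) → ℝ)
    (L Lhat : (Fin p → ℝ) → ℝ)
    (hL : ∀ θ, L θ = -(∑ i, θ i * T i) + F θ)
    (hLhat : ∀ θ, Lhat θ = -(∑ i, θ i * That i) + F θ)
    (Q : Matrix (Fin p) (Fin p) ℝ)
    (QF : (Fin p → ℝ) → ℝ) (hQF : ∀ v, QF v = ∑ i, ∑ j, v i * Q i j * v j)
    (lam α κmin κmax : ℝ)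
    (hlam : 0 < lam) (hα : 0 < α) (hκmin : 0 < κmin) (hκmax : 0 < κmax)
    (θstar : Fin p → ℝ)
    (hopt : ∀ θ, L θstar ≤ L θ)
    (hstarsupp : ∀ i ∉ S, θstar i = 0)
    (hRE : ∀ δ : Fin p → ℝ,
      (∑ i ∈ Sᶜ, |δ i|) ≤ 3 * ∑ i ∈ S, |δ i| →
      κmin ^ 2 * ∑ i ∈ S, (δ i) ^ 2 ≤ QF δ)
    (hQmax : ∀ δ : Fin p → ℝ, (∀ i ∉ S, δ i = 0) →
      QF δ ≤ κmax ^ 2 * ∑ i ∈ S, (δ i) ^ 2)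
    (hSClower : ∀ θ : Fin p → ℝ, L θ - L θstar ≤ 1 / (65 * α ^ 2) →
      (1 / 4) * QF (fun i => θ i - θstar i) ≤ L θ - L θstar)
    (hSCupper : ∀ θ : Fin p → ℝ, QF (fun i => θ i - θstar i) ≤ 1 / (16 * α ^ 2) →
      L θ - L θstar ≤ (3 / 4) * QF (fun i => θ i - θstar i))
    (hinf : ∀ i, |T i - That i| ≤ lam / 2)
    (hlam2 : lam * (270 * α ^ 2 * ∑ i, |θstar i|) ≤ 1)
    (hlam3 : lam * (340 * κmax * α * Real.sqrt s) ≤ κmin ^ 2)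
    (θhat : Fin p → ℝ)
    (hmin : ∀ θ, Lhat θhat + lam * ∑ i, |θhat i| ≤ Lhat θ + lam * ∑ i, |θ i|)
    (τ : ℝ) (hτ : τ = 18 * lam / κmin ^ 2)
    (θtilde : Fin p → ℝ)
    (htilde_mem : ∀ i, |θhat i| ≤ τ → θtilde i = 0)
    (htilde_min : ∀ θ : Fin p → ℝ, (∀ i, |θhat i| ≤ τ → θ i = 0) →
      Lhat θtilde + lam * ∑ i, |θtilde i| ≤ Lhat θ + lam * ∑ i, |θ i|) :
    (({i | θtilde i ≠ 0} : Finset (Fin p)).card ≤ 2 * s) ∧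
    (1 / 4) * QF (fun i => θtilde i - θstar i) ≤ L θtilde - L θstar ∧
    L θtilde - L θstar ≤ (12 * κmax / κmin) ^ 2 * (9 * s * lam ^ 2 / κmin ^ 2) := by
  have hs1 : (1:ℝ) ≤ (s:ℝ) := by exact_mod_cast hs
  have hspos : (0:ℝ) < s := by linarith only [hs1]
  have hsq_s : Real.sqrt s * Real.sqrt s = (s:ℝ) := Real.mul_self_sqrt (by positivity)
  have hτpos : 0 < τ := by rw [hτ]; positivity
  -- shared division atoms
  set c1 : ℝ := lam * Real.sqrt s / κmin^2 with hc1
  set c2 : ℝ := lam * (s:ℝ) / κmin^2 with hc2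
  set c3 : ℝ := lam^2 * (s:ℝ) / κmin^4 with hc3
  set c4 : ℝ := lam^2 * κmax^2 * (s:ℝ) / κmin^4 with hc4
  set c5 : ℝ := lam^2 * (s:ℝ) / κmin^2 with hc5
  set c6 : ℝ := lam * Real.sqrt s / κmin with hc6
  have hc1nn : 0 ≤ c1 := by rw [hc1]; positivity
  have hc4nn : 0 ≤ c4 := by rw [hc4]; positivity
  -- bridges between atoms
  have b1 : Real.sqrt s * (6*c1) = 6*c2 := by
    rw [hc1, hc2]; linear_combination (6*lam/κmin^2) * hsq_s
  have b2 : (s:ℝ)*τ = 18*c2 := by rw [hτ, hc2]; ring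
  have b3 : (s:ℝ)*τ^2 = 324*c3 := by rw [hτ, hc3]; ring
  have b4 : 2*τ*(6*c2) = 216*c3 := by rw [hτ, hc2, hc3]; ring
  have b5 : (6*c1)*(6*c1) = 36*c3 := by
    rw [hc1, hc3]; linear_combination (36*lam^2/κmin^4) * hsq_s
  have b6 : κmax^2*(576*c3) = 576*c4 := by rw [hc3, hc4]; ring
  have b7 : Real.sqrt s * (24*c1) = 24*c2 := by
    rw [hc1, hc2]; linear_combination (24*lam/κmin^2) * hsq_s
  have b8 : (24*c1)^2 = 576*c3 := by
    rw [hc1, hc3]; linear_combination (576*lam^2/κmin^4) * hsq_s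
  have b9 : lam*(24*c2) = 24*c5 := by rw [hc2, hc5]; ring
  have b10 : lam/2*(24*c2) = 12*c5 := by rw [hc2, hc5]; ring
  have b11 : c6*c6 = c5 := by
    rw [hc6, hc5]; linear_combination (lam^2/κmin^2) * hsq_s
  -- L in terms of Lhat
  have hLLhat : ∀ θ : Fin p → ℝ, L θ = Lhat θ + ∑ i, θ i * (That i - T i) := by
    intro θ
    rw [hL, hLhat]
    have : ∑ i, θ i * (That i - T i)
        = (∑ i, θ i * That i) - ∑ i, θ i * T i := by
      rw [← Finset.sum_sub_distrib]
      exact Finset.sum_congr rfl (fun i _ => by ring)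
    rw [this]; ring
  -- perturbation bound
  have hpert : ∀ v : Fin p → ℝ, (∑ i, v i * (That i - T i)) ≤ lam/2 * ∑ i, |v i| := by
    intro v
    rw [Finset.mul_sum]
    refine Finset.sum_le_sum (fun i _ => ?_)
    calc v i * (That i - T i) ≤ |v i * (That i - T i)| := le_abs_self _
      _ = |v i| * |That i - T i| := abs_mul _ _
      _ ≤ |v i| * (lam/2) := by
          refine mul_le_mul_of_nonneg_left ?_ (abs_nonneg _)
          rw [abs_sub_comm]; exact hinf i
      _ = lam/2 * |v i| := mul_comm _ _
  -- basic inequality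
  have basic : ∀ θ₁ θ₂ : Fin p → ℝ,
      (Lhat θ₁ + lam * ∑ i, |θ₁ i| ≤ Lhat θ₂ + lam * ∑ i, |θ₂ i|) →
      L θ₁ - L θ₂ ≤ lam/2 * (∑ i, |θ₁ i - θ₂ i|)
        + lam * ((∑ i, |θ₂ i|) - ∑ i, |θ₁ i|) := by
    intro θ₁ θ₂ h
    have e1 : L θ₁ - L θ₂ = (Lhat θ₁ - Lhat θ₂) + ∑ i, (θ₁ i - θ₂ i) * (That i - T i) := by
      rw [hLLhat θ₁, hLLhat θ₂]
      have : ∑ i, (θ₁ i - θ₂ i) * (That i - T i)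
          = (∑ i, θ₁ i * (That i - T i)) - ∑ i, θ₂ i * (That i - T i) := by
        rw [← Finset.sum_sub_distrib]
        exact Finset.sum_congr rfl (fun i _ => by ring)
      rw [this]; ring
    have e2 := hpert (fun i => θ₁ i - θ₂ i)
    beta_reduce at e2
    have e3 : Lhat θ₁ - Lhat θ₂ ≤ lam * ((∑ i, |θ₂ i|) - ∑ i, |θ₁ i|) := by
      have e4 : lam * ((∑ i, |θ₂ i|) - ∑ i, |θ₁ i|)
          = lam * (∑ i, |θ₂ i|) - lam * ∑ i, |θ₁ i| := by ring
      linarith only [h, e4.ge]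
    linarith only [e1, e2, e3]
  -- split of ℓ1 norms
  have split : ∀ v : Fin p → ℝ,
      (∑ i, |v i|) = (∑ i ∈ S, |v i|) + ∑ i ∈ Sᶜ, |v i| :=
    fun v => (Finset.sum_add_sum_compl S (fun i => |v i|)).symm
  have hstar1 : (∑ i, |θstar i|) = ∑ i ∈ S, |θstar i| := by
    rw [split θstar]
    have : (∑ i ∈ Sᶜ, |θstar i|) = 0 :=
      Finset.sum_eq_zero (fun i hi => by
        rw [hstarsupp i (Finset.mem_compl.mp hi), abs_zero])
    rw [this, add_zero]
  have hstarnn : 0 ≤ ∑ i, |θstar i| := Finset.sum_nonneg (fun i _ => abs_nonneg _)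
  -- key comparison of ℓ1 norms against θ⋆
  have h6 : ∀ θ : Fin p → ℝ,
      (∑ i, |θstar i|) - (∑ i, |θ i|)
      ≤ (∑ i ∈ S, |θ i - θstar i|) - ∑ i ∈ Sᶜ, |θ i - θstar i| := by
    intro θ
    have hA : (∑ i ∈ Sᶜ, |θ i|) = ∑ i ∈ Sᶜ, |θ i - θstar i| :=
      Finset.sum_congr rfl (fun i hi => by
        rw [hstarsupp i (Finset.mem_compl.mp hi), sub_zero])
    have hB : (∑ i ∈ S, |θstar i|) - (∑ i ∈ S, |θ i|) ≤ ∑ i ∈ S, |θ i - θstar i| := by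
      rw [← Finset.sum_sub_distrib]
      refine Finset.sum_le_sum (fun i _ => ?_)
      have := abs_sub_abs_le_abs_sub (θstar i) (θ i)
      rwa [abs_sub_comm] at this
    have hC := split θ
    rw [hstar1]
    linarith only [hA, hB, hC]
  -- ℓ1-ℓ2 comparison on S
  have l1l2 : ∀ v : Fin p → ℝ,
      (∑ i ∈ S, |v i|) ≤ Real.sqrt s * Real.sqrt (∑ i ∈ S, (v i)^2) := by
    intro v
    have h := sq_sum_le_card_mul_sum_sq (s := S) (f := fun i => |v i|)
    have h' : ((∑ i ∈ S, |v i|):ℝ)^2 ≤ (s:ℝ) * ∑ i ∈ S, (v i)^2 := by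
      have e : (∑ i ∈ S, |v i| ^ 2) = ∑ i ∈ S, (v i)^2 :=
        Finset.sum_congr rfl (fun i _ => sq_abs _)
      calc ((∑ i ∈ S, |v i|):ℝ)^2 ≤ (S.card:ℝ) * ∑ i ∈ S, |v i|^2 := by exact_mod_cast h
        _ = (s:ℝ) * ∑ i ∈ S, (v i)^2 := by rw [e, hS]
    have hnn : 0 ≤ ∑ i ∈ S, |v i| := Finset.sum_nonneg (fun i _ => abs_nonneg _)
    calc (∑ i ∈ S, |v i|) = Real.sqrt ((∑ i ∈ S, |v i|)^2) := (Real.sqrt_sq hnn).symm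
      _ ≤ Real.sqrt ((s:ℝ) * ∑ i ∈ S, (v i)^2) := Real.sqrt_le_sqrt h'
      _ = Real.sqrt s * Real.sqrt (∑ i ∈ S, (v i)^2) := Real.sqrt_mul (by positivity) _
  -- numeric consequences of hlam3
  have key3 : 115600 * (lam^2 * (κmax^2 * (α^2 * (s:ℝ)))) ≤ κmin^4 := by
    have h0 : (0:ℝ) ≤ lam * (340 * κmax * α * Real.sqrt s) := by positivity
    have h := mul_le_mul hlam3 hlam3 h0 (by positivity : (0:ℝ) ≤ κmin^2)
    calc 115600 * (lam^2 * (κmax^2 * (α^2 * (s:ℝ))))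
        = (lam * (340 * κmax * α * Real.sqrt s)) * (lam * (340 * κmax * α * Real.sqrt s)) := by
          rw [show (lam * (340 * κmax * α * Real.sqrt s)) * (lam * (340 * κmax * α * Real.sqrt s))
            = 115600 * (lam^2 * (κmax^2 * (α^2 * (Real.sqrt s * Real.sqrt s)))) from by ring,
            hsq_s]
      _ ≤ κmin^2 * κmin^2 := h
      _ = κmin^4 := by ring
  have hstarbound : lam * (∑ i, |θstar i|) * α^2 ≤ 1/270 := by
    have e : lam * (270 * α ^ 2 * ∑ i, |θstar i|) = 270 * (lam * (∑ i, |θstar i|) * α^2) := by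
      ring
    rw [e] at hlam2
    linarith only [hlam2]
  -- κmin ≤ κmax
  have hkk2 : κmin^2 ≤ κmax^2 := by
    have h1 : (∑ i ∈ Sᶜ, |(fun i => if i ∈ S then (1:ℝ) else 0) i|) = 0 :=
      Finset.sum_eq_zero (fun i hi => by
        simp [Finset.mem_compl.mp hi])
    have h2 : (∑ i ∈ S, |(fun i => if i ∈ S then (1:ℝ) else 0) i|) = s := by
      rw [Finset.sum_congr rfl (fun i hi => by simp [hi] : ∀ i ∈ S,
        |(fun i => if i ∈ S then (1:ℝ) else 0) i| = 1)]
      simp [hS]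
    have h3 : (∑ i ∈ S, ((fun i => if i ∈ S then (1:ℝ) else 0) i)^2) = s := by
      rw [Finset.sum_congr rfl (fun i hi => by simp [hi] : ∀ i ∈ S,
        ((fun i => if i ∈ S then (1:ℝ) else 0) i)^2 = 1)]
      simp [hS]
    have hre := hRE (fun i => if i ∈ S then (1:ℝ) else 0) (by rw [h1, h2]; positivity)
    have hqm := hQmax (fun i => if i ∈ S then (1:ℝ) else 0) (fun i hi => by simp [hi])
    rw [h3] at hre hqm
    have h4 : κmin^2 * (s:ℝ) ≤ κmax^2 * (s:ℝ) := le_trans hre hqm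
    exact le_of_mul_le_mul_right h4 hspos
  ----------------------------------------------------------------
  -- STEP 1 : analysis of the lasso estimator θhat
  ----------------------------------------------------------------
  have hb1 := basic θhat θstar (hmin θstar)
  have hD1nn : 0 ≤ L θhat - L θstar := by linarith only [hopt θhat]
  have hsplitδ := split (fun i => θhat i - θstar i)
  beta_reduce at hsplitδ
  have h6hat := h6 θhat
  -- K1
  have hK1 : L θhat - L θstar
      ≤ 3*lam/2 * (∑ i ∈ S, |θhat i - θstar i|)
        - lam/2 * (∑ i ∈ Sᶜ, |θhat i - θstar i|) := by
    have m1 : lam * ((∑ i, |θstar i|) - ∑ i, |θhat i|)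
        ≤ lam * ((∑ i ∈ S, |θhat i - θstar i|) - ∑ i ∈ Sᶜ, |θhat i - θstar i|) :=
      mul_le_mul_of_nonneg_left h6hat hlam.le
    have m2 : lam/2 * (∑ i, |θhat i - θstar i|)
        = lam/2 * ((∑ i ∈ S, |θhat i - θstar i|) + ∑ i ∈ Sᶜ, |θhat i - θstar i|) := by
      rw [← hsplitδ]
    linarith only [hb1, m1, m2]
  -- cone condition
  have hcone : (∑ i ∈ Sᶜ, |θhat i - θstar i|) ≤ 3 * ∑ i ∈ S, |θhat i - θstar i| := by
    have h : lam * (∑ i ∈ Sᶜ, |θhat i - θstar i|)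
        ≤ lam * (3 * ∑ i ∈ S, |θhat i - θstar i|) := by
      linarith only [hK1, hD1nn]
    exact le_of_mul_le_mul_left h hlam
  -- a priori bound for θhat
  have hK3 : L θhat - L θstar ≤ 1 / (65 * α ^ 2) := by
    have htri : (∑ i, |θhat i - θstar i|) ≤ (∑ i, |θhat i|) + ∑ i, |θstar i| := by
      rw [← Finset.sum_add_distrib]
      exact Finset.sum_le_sum (fun i _ => abs_sub _ _)
    have m1 : lam/2 * (∑ i, |θhat i - θstar i|)
        ≤ lam/2 * ((∑ i, |θhat i|) + ∑ i, |θstar i|) :=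
      mul_le_mul_of_nonneg_left htri (by positivity)
    have m2 : 0 ≤ lam * ∑ i, |θhat i| :=
      mul_nonneg hlam.le (Finset.sum_nonneg (fun i _ => abs_nonneg _))
    have hap : L θhat - L θstar ≤ 3*lam/2 * ∑ i, |θstar i| := by
      linarith only [hb1, m1, m2]
    have hnum : 3*lam/2 * (∑ i, |θstar i|) ≤ 1 / (65 * α ^ 2) := by
      rw [le_div_iff₀ (by positivity : (0:ℝ) < 65 * α^2)]
      have e : 3*lam/2 * (∑ i, |θstar i|) * (65*α^2)
          = (195/2) * (lam * (∑ i, |θstar i|) * α^2) := by ring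
      rw [e]
      linarith only [hstarbound, mul_nonneg (mul_nonneg hlam.le hstarnn) (sq_nonneg α)]
    linarith only [hap, hnum]
  have hlow1 := hSClower θhat hK3
  have hre1 := hRE (fun i => θhat i - θstar i) hcone
  beta_reduce at hre1
  -- ℓ2 bound for θhat on S
  have hsδ2nn : 0 ≤ ∑ i ∈ S, (θhat i - θstar i)^2 :=
    Finset.sum_nonneg (fun i _ => sq_nonneg _)
  set x : ℝ := Real.sqrt (∑ i ∈ S, (θhat i - θstar i)^2) with hxdef
  have hxnn : 0 ≤ x := Real.sqrt_nonneg _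
  have hxx : x * x = ∑ i ∈ S, (θhat i - θstar i)^2 := Real.mul_self_sqrt hsδ2nn
  have hl1x := l1l2 (fun i => θhat i - θstar i)
  beta_reduce at hl1x
  rw [← hxdef] at hl1x
  have hscnn : 0 ≤ ∑ i ∈ Sᶜ, |θhat i - θstar i| :=
    Finset.sum_nonneg (fun i _ => abs_nonneg _)
  have hcomb : κmin^2 * (x*x) ≤ 6*lam*(Real.sqrt s * x) := by
    have t1 : lam * (∑ i ∈ S, |θhat i - θstar i|) ≤ lam * (Real.sqrt s * x) :=
      mul_le_mul_of_nonneg_left hl1x hlam.le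
    have t2 : 0 ≤ lam * ∑ i ∈ Sᶜ, |θhat i - θstar i| := mul_nonneg hlam.le hscnn
    rw [hxx]
    linarith only [hre1, hlow1, hK1, t1, t2]
  have hxκ : x * κmin^2 ≤ 6*(lam*Real.sqrt s) := by
    rcases eq_or_lt_of_le hxnn with h | h
    · rw [← h, zero_mul]; positivity
    · have e1 : (x*κmin^2)*x ≤ (6*(lam*Real.sqrt s))*x := by linarith only [hcomb]
      exact le_of_mul_le_mul_right e1 h
  have hxb : x ≤ 6*c1 := by
    rw [hc1, show (6:ℝ)*(lam*Real.sqrt s/κmin^2) = 6*(lam*Real.sqrt s)/κmin^2 from by ring,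
      le_div_iff₀ (by positivity : (0:ℝ) < κmin^2)]
    exact hxκ
  have hsδ1b : (∑ i ∈ S, |θhat i - θstar i|) ≤ 6*c2 := by
    have t1 : Real.sqrt s * x ≤ Real.sqrt s * (6*c1) :=
      mul_le_mul_of_nonneg_left hxb (Real.sqrt_nonneg _)
    rw [b1] at t1
    linarith only [hl1x, t1]
  have hscδb : (∑ i ∈ Sᶜ, |θhat i - θstar i|) ≤ (s:ℝ) * τ := by
    linarith only [hcone, hsδ1b, b2]
  have hsδ2b : (∑ i ∈ S, (θhat i - θstar i)^2) ≤ 36*c3 := by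
    have t1 : x * x ≤ (6*c1) * (6*c1) :=
      mul_le_mul hxb hxb hxnn (by linarith only [hc1nn])
    rw [b5] at t1
    rw [← hxx]
    exact t1
  ----------------------------------------------------------------
  -- STEP 2 : sparsity of θtilde
  ----------------------------------------------------------------
  have hsparse : (({i | θtilde i ≠ 0} : Finset (Fin p)).card ≤ 2 * s) := by
    set A : Finset (Fin p) := ({i | θtilde i ≠ 0} : Finset (Fin p)) with hAdef
    have hAmem : ∀ i, i ∈ A → τ < |θhat i| := by
      intro i hi
      have h1 : θtilde i ≠ 0 := by
        rw [hAdef] at hi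
        simpa [Set.mem_toFinset] using hi
      exact lt_of_not_ge (fun h => h1 (htilde_mem i h))
    have hcard1 : (A ∩ S).card ≤ s := by
      calc (A ∩ S).card ≤ S.card := Finset.card_le_card (Finset.inter_subset_right)
        _ = s := hS
    have hcard2 : (A \ S).card ≤ s := by
      have hsub : ∀ i ∈ A \ S, τ ≤ |θhat i - θstar i| := by
        intro i hi
        obtain ⟨hiA, hiS⟩ := Finset.mem_sdiff.mp hi
        rw [hstarsupp i hiS, sub_zero]
        exact (hAmem i hiA).le
      have h1 : (A \ S).card • τ ≤ ∑ i ∈ A \ S, |θhat i - θstar i| :=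
        Finset.card_nsmul_le_sum _ _ _ hsub
      have h2 : (∑ i ∈ A \ S, |θhat i - θstar i|) ≤ ∑ i ∈ Sᶜ, |θhat i - θstar i| := by
        refine Finset.sum_le_sum_of_subset_of_nonneg ?_ (fun i _ _ => abs_nonneg _)
        intro i hi
        exact Finset.mem_compl.mpr (Finset.mem_sdiff.mp hi).2
      have h3 : ((A \ S).card : ℝ) * τ ≤ (s:ℝ) * τ := by
        rw [← nsmul_eq_mul]
        exact le_trans h1 (le_trans h2 hscδb)
      have h4 : ((A \ S).card : ℝ) ≤ (s:ℝ) := le_of_mul_le_mul_right h3 hτpos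
      exact_mod_cast h4
    have hA : A.card ≤ (A ∩ S).card + (A \ S).card := by
      have hsub : A ⊆ (A ∩ S) ∪ (A \ S) := by
        intro i hi
        by_cases h : i ∈ S
        · exact Finset.mem_union_left _ (Finset.mem_inter.mpr ⟨hi, h⟩)
        · exact Finset.mem_union_right _ (Finset.mem_sdiff.mpr ⟨hi, h⟩)
      exact le_trans (Finset.card_le_card hsub) (Finset.card_union_le _ _)
    omega
  ----------------------------------------------------------------
  -- STEP 3 : the comparison point θ'
  ----------------------------------------------------------------
  set θ' : Fin p → ℝ := fun i => if |θhat i| ≤ τ then 0 else θstar i with hθ'def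
  have hθ'mem : ∀ i, |θhat i| ≤ τ → θ' i = 0 := fun i h => if_pos h
  have hwsupp : ∀ i ∉ S, θ' i - θstar i = 0 := by
    intro i hi
    rw [hstarsupp i hi, sub_zero, hθ'def]
    by_cases h : |θhat i| ≤ τ <;> simp [h, hstarsupp i hi]
  have hwptwise : ∀ i ∈ S, (θ' i - θstar i)^2 ≤ (τ + |θhat i - θstar i|)^2 := by
    intro i _
    by_cases h : |θhat i| ≤ τ
    · have e : θ' i = 0 := if_pos h
      rw [e]
      have h1 : |θstar i| ≤ τ + |θhat i - θstar i| := by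
        have h2 := abs_sub (θhat i) (θhat i - θstar i)
        simp only [sub_sub_cancel] at h2
        linarith only [h2, h]
      have e0 : (0 - θstar i)^2 = |θstar i|^2 := by rw [sq_abs]; ring
      rw [e0]
      exact pow_le_pow_left₀ (abs_nonneg _) h1 2
    · have e : θ' i = θstar i := if_neg h
      rw [e]
      simpa using sq_nonneg (τ + |θhat i - θstar i|)
  -- ℓ2 bound for w = θ' - θstar
  have hs2w : (∑ i ∈ S, (θ' i - θstar i)^2) ≤ 576*c3 := by
    have h1 : (∑ i ∈ S, (θ' i - θstar i)^2) ≤ ∑ i ∈ S, (τ + |θhat i - θstar i|)^2 :=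
      Finset.sum_le_sum hwptwise
    have h2 : (∑ i ∈ S, (τ + |θhat i - θstar i|)^2)
        = (s:ℝ)*τ^2 + 2*τ*(∑ i ∈ S, |θhat i - θstar i|) + ∑ i ∈ S, (θhat i - θstar i)^2 := by
      have e : ∀ i ∈ S, (τ + |θhat i - θstar i|)^2
          = τ^2 + 2*τ*|θhat i - θstar i| + (θhat i - θstar i)^2 := by
        intro i _
        rw [add_sq, sq_abs]
      rw [Finset.sum_congr rfl e, Finset.sum_add_distrib, Finset.sum_add_distrib,
        Finset.sum_const, ← Finset.mul_sum, hS, nsmul_eq_mul]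
    have h4 : 2*τ*(∑ i ∈ S, |θhat i - θstar i|) ≤ 216*c3 := by
      have t1 : 2*τ*(∑ i ∈ S, |θhat i - θstar i|) ≤ 2*τ*(6*c2) :=
        mul_le_mul_of_nonneg_left hsδ1b (by linarith only [hτpos])
      rw [b4] at t1
      exact t1
    linarith only [h1, h2.le, b3, h4, hsδ2b]
  -- QF bound for w and smallness
  have hqmw := hQmax (fun i => θ' i - θstar i) hwsupp
  beta_reduce at hqmw
  have hQFw : QF (fun i => θ' i - θstar i) ≤ 576*c4 := by
    have t1 : κmax^2 * (∑ i ∈ S, (θ' i - θstar i)^2) ≤ κmax^2 * (576*c3) :=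
      mul_le_mul_of_nonneg_left hs2w (by positivity)
    rw [b6] at t1
    linarith only [hqmw, t1]
  have hQFwsmall : QF (fun i => θ' i - θstar i) ≤ 1 / (16 * α^2) := by
    have h1 : 576*c4 ≤ 1 / (16 * α^2) := by
      rw [hc4, show (576:ℝ)*(lam^2*κmax^2*(s:ℝ)/κmin^4)
          = 576*(lam^2*κmax^2*(s:ℝ))/κmin^4 from by ring,
        div_le_div_iff₀ (by positivity) (by positivity)]
      have hmnn : (0:ℝ) ≤ lam^2 * (κmax^2 * (α^2 * (s:ℝ))) := by positivity
      linarith only [key3, hmnn]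
    linarith only [hQFw, h1]
  have hBp := hSCupper θ' hQFwsmall
  have hB : L θ' - L θstar ≤ 432*c4 := by linarith only [hBp, hQFw]
  -- ℓ1 bound for w
  have hr1 : (∑ i, |θ' i - θstar i|) ≤ 24*c2 := by
    have h0 : (∑ i ∈ Sᶜ, |θ' i - θstar i|) = 0 :=
      Finset.sum_eq_zero (fun i hi => by
        rw [hwsupp i (Finset.mem_compl.mp hi), abs_zero])
    have h1 : (∑ i, |θ' i - θstar i|) = ∑ i ∈ S, |θ' i - θstar i| := by
      have hsp := split (fun i => θ' i - θstar i)
      beta_reduce at hsp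
      rw [hsp, h0, add_zero]
    have h2 := l1l2 (fun i => θ' i - θstar i)
    beta_reduce at h2
    have h576 : (∑ i ∈ S, (θ' i - θstar i)^2) ≤ (24*c1)^2 := by rw [b8]; exact hs2w
    have h3 : Real.sqrt (∑ i ∈ S, (θ' i - θstar i)^2) ≤ 24*c1 := by
      calc Real.sqrt (∑ i ∈ S, (θ' i - θstar i)^2)
          ≤ Real.sqrt ((24*c1)^2) := Real.sqrt_le_sqrt h576
        _ = 24*c1 := Real.sqrt_sq (by linarith only [hc1nn])
    have h4 : Real.sqrt s * Real.sqrt (∑ i ∈ S, (θ' i - θstar i)^2)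
        ≤ Real.sqrt s * (24*c1) :=
      mul_le_mul_of_nonneg_left h3 (Real.sqrt_nonneg _)
    rw [b7] at h4
    rw [h1]
    linarith only [h2, h4]
  ----------------------------------------------------------------
  -- STEP 4 : analysis of θtilde
  ----------------------------------------------------------------
  have hb2 := basic θtilde θ' (htilde_min θ' hθ'mem)
  have hD2nn : 0 ≤ L θtilde - L θstar := by linarith only [hopt θtilde]
  have htri2 : (∑ i, |θtilde i - θ' i|)
      ≤ (∑ i, |θtilde i - θstar i|) + ∑ i, |θ' i - θstar i| := by
    rw [← Finset.sum_add_distrib]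
    refine Finset.sum_le_sum (fun i _ => ?_)
    have h := abs_sub_le (θtilde i) (θstar i) (θ' i)
    rw [show |θstar i - θ' i| = |θ' i - θstar i| from abs_sub_comm _ _] at h
    exact h
  have hθ'le : (∑ i, |θ' i|) ≤ ∑ i, |θstar i| := by
    refine Finset.sum_le_sum (fun i _ => ?_)
    rw [hθ'def]
    by_cases h : |θhat i| ≤ τ <;> simp [h]
  have h6til := h6 θtilde
  have hsplitu := split (fun i => θtilde i - θstar i)
  beta_reduce at hsplitu
  have hn1θtnn : 0 ≤ ∑ i, |θtilde i| := Finset.sum_nonneg (fun i _ => abs_nonneg _)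
  -- main decomposition
  have hDmain : L θtilde - L θstar
      ≤ 3*lam/2 * (∑ i ∈ S, |θtilde i - θstar i|)
        - lam/2 * (∑ i ∈ Sᶜ, |θtilde i - θstar i|)
        + lam/2 * (∑ i, |θ' i - θstar i|)
        + (L θ' - L θstar) := by
    have m1 : lam/2 * (∑ i, |θtilde i - θ' i|)
        ≤ lam/2 * ((∑ i, |θtilde i - θstar i|) + ∑ i, |θ' i - θstar i|) :=
      mul_le_mul_of_nonneg_left htri2 (by positivity)
    have m2 : lam * ((∑ i, |θ' i|) - ∑ i, |θtilde i|)
        ≤ lam * ((∑ i, |θstar i|) - ∑ i, |θtilde i|) :=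
      mul_le_mul_of_nonneg_left (by linarith only [hθ'le]) hlam.le
    have m3 : lam * ((∑ i, |θstar i|) - ∑ i, |θtilde i|)
        ≤ lam * ((∑ i ∈ S, |θtilde i - θstar i|) - ∑ i ∈ Sᶜ, |θtilde i - θstar i|) :=
      mul_le_mul_of_nonneg_left h6til hlam.le
    have m4 : lam/2 * (∑ i, |θtilde i - θstar i|)
        = lam/2 * ((∑ i ∈ S, |θtilde i - θstar i|) + ∑ i ∈ Sᶜ, |θtilde i - θstar i|) := by
      rw [← hsplitu]
    linarith only [hb2, m1, m2, m3, m4]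
  -- a priori bound for θtilde
  have hDapriori : L θtilde - L θstar ≤ 1 / (65 * α ^ 2) := by
    have htri3 : (∑ i, |θtilde i - θ' i|) ≤ (∑ i, |θtilde i|) + ∑ i, |θ' i| := by
      rw [← Finset.sum_add_distrib]
      exact Finset.sum_le_sum (fun i _ => abs_sub _ _)
    have m1 : lam/2 * (∑ i, |θtilde i - θ' i|)
        ≤ lam/2 * ((∑ i, |θtilde i|) + ∑ i, |θ' i|) :=
      mul_le_mul_of_nonneg_left htri3 (by positivity)
    have m2 : lam * ((∑ i, |θ' i|) - ∑ i, |θtilde i|)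
        ≤ lam * ((∑ i, |θstar i|) - ∑ i, |θtilde i|) :=
      mul_le_mul_of_nonneg_left (by linarith only [hθ'le]) hlam.le
    have m3 : lam/2 * (∑ i, |θ' i|) ≤ lam/2 * (∑ i, |θstar i|) :=
      mul_le_mul_of_nonneg_left hθ'le (by positivity)
    have m4 : 0 ≤ lam * ∑ i, |θtilde i| := mul_nonneg hlam.le hn1θtnn
    have hap : L θtilde - L θstar ≤ 3*lam/2 * (∑ i, |θstar i|) + (L θ' - L θstar) := by
      linarith only [hb2, m1, m2, m3, m4]
    have hBα : (L θ' - L θstar) * α^2 ≤ 432/115600 := by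
      have h1 : (432*c4) * α^2 ≤ 432/115600 := by
        rw [hc4, show (432*(lam^2*κmax^2*(s:ℝ)/κmin^4)) * α^2
            = 432*(lam^2*(κmax^2*(α^2*(s:ℝ))))/κmin^4 from by ring,
          div_le_div_iff₀ (by positivity) (by norm_num)]
        linarith only [key3]
      have h2 : (L θ' - L θstar) * α^2 ≤ (432*c4) * α^2 :=
        mul_le_mul_of_nonneg_right hB (sq_nonneg α)
      linarith only [h1, h2]
    rw [le_div_iff₀ (by positivity : (0:ℝ) < 65 * α^2)]
    have h3 : (L θtilde - L θstar) * (65*α^2)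
        ≤ (3*lam/2 * (∑ i, |θstar i|) + (L θ' - L θstar)) * (65*α^2) :=
      mul_le_mul_of_nonneg_right hap (by positivity)
    have e : (3*lam/2 * (∑ i, |θstar i|) + (L θ' - L θstar)) * (65*α^2)
        = (195/2) * (lam * (∑ i, |θstar i|) * α^2) + 65 * ((L θ' - L θstar) * α^2) := by ring
    rw [e] at h3
    linarith only [hstarbound, hBα, h3, mul_nonneg (mul_nonneg hlam.le hstarnn) (sq_nonneg α)]
  -- conclusion part 2 (lower bound)
  have hlow2 := hSClower θtilde hDapriori
  ----------------------------------------------------------------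
  -- STEP 5 : final risk bound
  ----------------------------------------------------------------
  refine ⟨hsparse, hlow2, ?_⟩
  have htarget : (12 * κmax / κmin) ^ 2 * (9 * (s:ℕ) * lam ^ 2 / κmin ^ 2) = 1296*c4 := by
    rw [hc4]; ring
  have hmono : c5 ≤ c4 := by
    rw [hc5, hc4, div_le_div_iff₀ (by positivity) (by positivity)]
    have h := mul_le_mul_of_nonneg_left hkk2
      (by positivity : (0:ℝ) ≤ lam^2*(s:ℝ)*κmin^2)
    linarith only [h]
  by_cases hcase : (∑ i ∈ Sᶜ, |θtilde i - θstar i|) ≤ 3 * ∑ i ∈ S, |θtilde i - θstar i|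
  · -- cone case : use RE
    have hreu := hRE (fun i => θtilde i - θstar i) hcase
    beta_reduce at hreu
    have hs2unn : 0 ≤ ∑ i ∈ S, (θtilde i - θstar i)^2 :=
      Finset.sum_nonneg (fun i _ => sq_nonneg _)
    set y : ℝ := Real.sqrt (∑ i ∈ S, (θtilde i - θstar i)^2) with hydef
    have hynn : 0 ≤ y := Real.sqrt_nonneg _
    have hyy : y * y = ∑ i ∈ S, (θtilde i - θstar i)^2 := Real.mul_self_sqrt hs2unn
    set z : ℝ := Real.sqrt (L θtilde - L θstar) with hzdef
    have hznn : 0 ≤ z := Real.sqrt_nonneg _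
    have hzz : z * z = L θtilde - L θstar := Real.mul_self_sqrt hD2nn
    -- κmin * y ≤ 2 * z
    have hyz : κmin * y ≤ 2 * z := by
      have h1 : κmin^2 * (y*y) ≤ 4 * (z*z) := by
        rw [hyy, hzz]
        linarith only [hreu, hlow2]
      have h2 : (κmin*y)^2 ≤ (2*z)^2 := by linarith only [h1]
      exact le_of_sq_le_sq h2 (by linarith only [hznn])
    -- ℓ1-ℓ2 on u
    have hl1u := l1l2 (fun i => θtilde i - θstar i)
    beta_reduce at hl1u
    rw [← hydef] at hl1u
    -- D ≤ (3λ/2)√s y + Cw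
    have hscunn : 0 ≤ ∑ i ∈ Sᶜ, |θtilde i - θstar i| :=
      Finset.sum_nonneg (fun i _ => abs_nonneg _)
    have hD2 : L θtilde - L θstar
        ≤ 3*lam/2 * (Real.sqrt s * y)
          + (lam/2 * (∑ i, |θ' i - θstar i|) + (L θ' - L θstar)) := by
      have m1 : 3*lam/2 * (∑ i ∈ S, |θtilde i - θstar i|) ≤ 3*lam/2 * (Real.sqrt s * y) :=
        mul_le_mul_of_nonneg_left hl1u (by positivity)
      have m2 : 0 ≤ lam/2 * ∑ i ∈ Sᶜ, |θtilde i - θstar i| :=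
        mul_nonneg (by positivity) hscunn
      linarith only [hDmain, m1, m2]
    -- z² ≤ 3 c6 z + Cw
    have hDz : z*z ≤ 3*(c6*z)
        + (lam/2 * (∑ i, |θ' i - θstar i|) + (L θ' - L θstar)) := by
      have m1 : 3*lam/2 * (Real.sqrt s * y) ≤ 3*lam/2 * (Real.sqrt s * (2*z/κmin)) := by
        refine mul_le_mul_of_nonneg_left ?_ (by positivity)
        refine mul_le_mul_of_nonneg_left ?_ (Real.sqrt_nonneg _)
        rw [le_div_iff₀ hκmin]
        linarith only [hyz]
      have m2 : 3*lam/2 * (Real.sqrt s * (2*z/κmin)) = 3*(c6*z) := by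
        rw [hc6]; ring
      rw [hzz]
      linarith only [hD2, m1, m2.le]
    -- AM-GM
    have hamgm : 6*(c6*z) ≤ z*z + 9*c5 := by
      have h := sq_nonneg (z - 3*c6)
      have e : (z - 3*c6)^2 = z*z - 6*(c6*z) + 9*(c6*c6) := by ring
      rw [e, b11] at h
      linarith only [h]
    have hfinal : L θtilde - L θstar
        ≤ 9*c5 + (lam * (∑ i, |θ' i - θstar i|) + 2*(L θ' - L θstar)) := by
      rw [← hzz]
      linarith only [hDz, hamgm]
    have hr1' : lam * (∑ i, |θ' i - θstar i|) ≤ 24*c5 := by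
      have t1 : lam * (∑ i, |θ' i - θstar i|) ≤ lam * (24*c2) :=
        mul_le_mul_of_nonneg_left hr1 hlam.le
      rw [b9] at t1
      exact t1
    rw [htarget]
    have hBb : 2*(L θ' - L θstar) ≤ 864*c4 := by linarith only [hB]
    linarith only [hfinal, hr1', hBb, hmono, hc4nn]
  · -- non-cone case : penalty dominates
    push_neg at hcase
    have m0 : 0 ≤ lam * ((∑ i ∈ Sᶜ, |θtilde i - θstar i|) - 3 * ∑ i ∈ S, |θtilde i - θstar i|) :=
      mul_nonneg hlam.le (by linarith only [hcase])
    have hDc : L θtilde - L θstar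
        ≤ lam/2 * (∑ i, |θ' i - θstar i|) + (L θ' - L θstar) := by
      linarith only [hDmain, m0]
    have hr1' : lam/2 * (∑ i, |θ' i - θstar i|) ≤ 12*c5 := by
      have t1 : lam/2 * (∑ i, |θ' i - θstar i|) ≤ lam/2 * (24*c2) :=
        mul_le_mul_of_nonneg_left hr1 (by positivity)
      rw [b10] at t1
      exact t1
    rw [htarget]
    linarith only [hDc, hr1', hB, hmono, hc4nn]
end
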